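/- arXiv:2404.08131 — 5 statements merged into one kernel-verified Lean document; each statement's English description precedes it below -/
import Mathlib

section
/- Let F = {e_1, ..., e_N} be a finite unit-norm tight frame for ℝ^d, let p be a permutation of {1, ..., N}, let K ∈ ℕ and δ > 0, and let x ∈ ℝ^d satisfy ‖x‖ ≤ (K − 1/2)δ. Let q_1, ..., q_N be the quantized sequence produced by the first-order ΣΔ quantization applied to the frame coefficients x_n = ⟨x, e_n⟩ with permutation p, and let x̄ = (d/N) Σ_{n=1}^{N} q_n e_{p(n)} be the quantized expansion of x. Then ‖x − x̄‖ ≤ (δ d / (2N)) (σ(F, p) + 1), where σ(F, p) is the frame variation of F with respect to p. -/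
open scoped RealInnerProductSpace BigOperators

/-- The matrix 2-norm (operator norm w.r.t. Euclidean norms), i.e. the largest
singular value. -/
noncomputable def opNorm {m n : ℕ} (A : Matrix (Fin m) (Fin n) ℝ) : ℝ :=
  ‖LinearMap.toContinuousLinearMap (Matrix.toEuclideanLin A)‖

/-- The `j`-th column of a matrix, viewed as a vector of `ℝ^m` with the Euclidean norm. -/
noncomputable def matCol {m n : ℕ} (A : Matrix (Fin m) (Fin n) ℝ) (j : Fin n) :
    EuclideanSpace ℝ (Fin m) :=
  WithLp.toLp 2 (fun i => A i j)

/-- Frame variation `σ(F,p)` of the ordered family `v = e ∘ p`: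
`∑_{i=1}^{N-1} ‖v i - v (i+1)‖`. -/
noncomputable def frameVar {E : Type*} [NormedAddCommGroup E] :
    {N : ℕ} → (Fin N → E) → ℝ
  | 0, _ => 0
  | n + 1, v => ∑ i : Fin n, ‖v i.castSucc - v i.succ‖

/-- The midrise quantization alphabet `A^δ_K`. -/
def midrise (δ : ℝ) (K : ℕ) : Set ℝ :=
  {a | ∃ j : Fin (2 * K), a = (-(K : ℝ) + 1 / 2 + (j : ℕ)) * δ}

/-- Componentwise application of a scalar function to a Euclidean vector. -/
noncomputable def cwMap (σ : ℝ → ℝ) {d : ℕ} (v : EuclideanSpace ℝ (Fin d)) :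
    EuclideanSpace ℝ (Fin d) :=
  WithLp.toLp 2 (fun j => σ (v j))

/-- `layerSeq σ m W X i` is the activated output after `i` layers:
`z_0 = X`, `z_{i+1} = σ.(W_i z_i)`. -/
noncomputable def layerSeq (σ : ℝ → ℝ) (m : ℕ → ℕ)
    (W : (i : ℕ) → Matrix (Fin (m (i + 1))) (Fin (m i)) ℝ)
    (X : EuclideanSpace ℝ (Fin (m 0))) : (i : ℕ) → EuclideanSpace ℝ (Fin (m i))
  | 0 => X
  | i + 1 => cwMap σ (Matrix.toEuclideanLin (W i) (layerSeq σ m W X i))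

/-- The `n`-layer feed-forward network `W_n σ(W_{n-1} σ(⋯ σ(W_1 X)⋯))`
(no activation after the last layer, no biases). -/
noncomputable def net (σ : ℝ → ℝ) (m : ℕ → ℕ)
    (W : (i : ℕ) → Matrix (Fin (m (i + 1))) (Fin (m i)) ℝ)
    (n : ℕ) (X : EuclideanSpace ℝ (Fin (m 0))) : EuclideanSpace ℝ (Fin (m n)) :=
  match n with
  | 0 => X
  | k + 1 => Matrix.toEuclideanLin (W k) (layerSeq σ m W X k)

/-- Componentwise ReLU. -/
noncomputable def relu {d : ℕ} (v : EuclideanSpace ℝ (Fin d)) : EuclideanSpace ℝ (Fin d) :=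
  cwMap (fun t => max 0 t) v

/-- A residual block `z(x) = W₂ σ(W₁ x) + x` with ReLU activation `σ`. -/
noncomputable def resBlock {k : ℕ} (W1 W2 : Matrix (Fin k) (Fin k) ℝ)
    (x : EuclideanSpace ℝ (Fin k)) : EuclideanSpace ℝ (Fin k) :=
  Matrix.toEuclideanLin W2 (relu (Matrix.toEuclideanLin W1 x)) + x

/-- Partial compositions of a residual network:
`y_0 = X`, `y_i = z^{[i]} ∘ σ ∘ ⋯ ∘ σ ∘ z^{[1]} (X)`, where block `i` (1-based)
uses matrices `W1 (i-1)`, `W2 (i-1)`. -/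
noncomputable def resPartial {k : ℕ} (W1 W2 : ℕ → Matrix (Fin k) (Fin k) ℝ)
    (X : EuclideanSpace ℝ (Fin k)) : ℕ → EuclideanSpace ℝ (Fin k)
  | 0 => X
  | 1 => resBlock (W1 0) (W2 0) X
  | i + 2 => resBlock (W1 (i + 1)) (W2 (i + 1)) (relu (resPartial W1 W2 X (i + 1)))


lemma midrise_near {δ : ℝ} (hδ : 0 < δ) {K : ℕ} (hK : 1 ≤ K) {w : ℝ} (hw : |w| ≤ K * δ) :
    ∃ a ∈ midrise δ K, |w - a| ≤ δ / 2 := by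
  obtain ⟨t, ht⟩ : ∃ t : ℝ, t = w / δ + K := ⟨_, rfl⟩
  have ht0 : 0 ≤ t := by
    have h1 : -((K : ℝ) * δ) ≤ w := (abs_le.mp hw).1
    have h2 : -(K : ℝ) ≤ w / δ := by rw [le_div_iff₀ hδ]; linarith
    rw [ht]; linarith
  have ht2 : t ≤ 2 * K := by
    have h1 : w ≤ (K : ℝ) * δ := (abs_le.mp hw).2
    have h2 : w / δ ≤ (K : ℝ) := by rw [div_le_iff₀ hδ]; linarith
    rw [ht]; linarith
  obtain ⟨j, hj⟩ : ∃ j, j = min (Nat.floor t) (2 * K - 1) := ⟨_, rfl⟩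
  have hjlt : j < 2 * K := by rw [hj]; exact lt_of_le_of_lt (min_le_right _ _) (by omega)
  have hjt : (j : ℝ) ≤ t ∧ t ≤ (j : ℝ) + 1 := by
    by_cases hc : Nat.floor t ≤ 2 * K - 1
    · have hjq : j = Nat.floor t := by rw [hj]; exact min_eq_left hc
      refine ⟨?_, ?_⟩
      · rw [hjq]; exact Nat.floor_le ht0
      · rw [hjq]; exact le_of_lt (Nat.lt_floor_add_one t)
    · have hge : 2 * K ≤ Nat.floor t := by omega
      have h3 : (2 * K : ℝ) ≤ t := by
        calc (2 * K : ℝ) = ((2 * K : ℕ) : ℝ) := by push_cast; ring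
          _ ≤ (Nat.floor t : ℝ) := by exact_mod_cast hge
          _ ≤ t := Nat.floor_le ht0
      have hteq : t = 2 * K := le_antisymm ht2 h3
      have hjq : j = 2 * K - 1 := by rw [hj]; exact min_eq_right (by omega)
      have hjr : (j : ℝ) = 2 * K - 1 := by
        rw [hjq, Nat.cast_sub (by omega)]; push_cast; ring
      constructor <;> rw [hjr, hteq] <;> linarith
  refine ⟨(-(K : ℝ) + 1 / 2 + ((⟨j, hjlt⟩ : Fin (2 * K)) : ℕ)) * δ, ⟨⟨j, hjlt⟩, rfl⟩, ?_⟩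
  have hw' : w = (t - K) * δ := by rw [ht]; field_simp; ring
  have heq : w - (-(K : ℝ) + 1 / 2 + ((⟨j, hjlt⟩ : Fin (2 * K)) : ℕ)) * δ
      = (t - ((j : ℝ) + 1 / 2)) * δ := by rw [hw']; simp; ring
  rw [heq, abs_mul, abs_of_pos hδ]
  obtain ⟨hjt1, hjt2⟩ := hjt
  have habs : |t - ((j : ℝ) + 1 / 2)| ≤ 1 / 2 := by
    rw [abs_le]
    constructor
    · linarith
    · linarith
  nlinarith

lemma abel_sum {E : Type*} [AddCommGroup E] [Module ℝ E] (U : ℕ → ℝ) (V : ℕ → E)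
    (hU0 : U 0 = 0) (M : ℕ) :
    ∑ n ∈ Finset.range (M + 1), (U (n + 1) - U n) • V n
      = (∑ n ∈ Finset.range M, U (n + 1) • (V n - V (n + 1))) + U (M + 1) • V M := by
  induction M with
  | zero => simp [hU0]
  | succ M ih =>
    rw [Finset.sum_range_succ, ih, Finset.sum_range_succ]
    simp only [smul_sub, sub_smul]
    abel

/-- Benedetto–Powell–Yılmaz error bound for first-order ΣΔ
quantization of a finite unit-norm tight frame.  If `F = {e 1, …, e N}` is a
FUNTF for `ℝ^d`, `p` a permutation, `‖x‖ ≤ (K - 1/2)δ`, and `q`, `u` are the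
quantized sequence and state variables produced by the first-order ΣΔ iteration
applied to the frame coefficients `⟪x, e n⟫` in the order given by `p`, then the
quantized expansion `x̄ = (d/N) ∑ q_n e_{p n}` satisfies
`‖x - x̄‖ ≤ (δ d / (2N)) (σ(F,p) + 1)`. -/
theorem stmt0 {d N : ℕ} (hd : 0 < d) (hN : 0 < N)
    (e : Fin N → EuclideanSpace ℝ (Fin d))
    (hunit : ∀ i, ‖e i‖ = 1)
    (htight : ∀ x : EuclideanSpace ℝ (Fin d),
      ∑ i, ⟪x, e i⟫ ^ 2 = ((N : ℝ) / d) * ‖x‖ ^ 2)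
    (p : Equiv.Perm (Fin N)) (K : ℕ) (δ : ℝ) (hδ : 0 < δ)
    (x : EuclideanSpace ℝ (Fin d)) (hx : ‖x‖ ≤ ((K : ℝ) - 1 / 2) * δ)
    (u : Fin (N + 1) → ℝ) (q : Fin N → ℝ)
    (hu0 : u 0 = 0)
    (hmem : ∀ n : Fin N, q n ∈ midrise δ K)
    (hmin : ∀ n : Fin N, ∀ a ∈ midrise δ K,
      |u n.castSucc + ⟪x, e (p n)⟫ - q n| ≤ |u n.castSucc + ⟪x, e (p n)⟫ - a|)
    (hrec : ∀ n : Fin N, u n.succ = u n.castSucc + ⟪x, e (p n)⟫ - q n) :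
    ‖x - ((d : ℝ) / N) • ∑ n, q n • e (p n)‖ ≤
      δ * d / (2 * N) * (frameVar (fun i => e (p i)) + 1) := by
  have hK1 : 1 ≤ K := by
    by_contra h
    have hK0 : K = 0 := by omega
    rw [hK0] at hx
    have := norm_nonneg x
    push_cast at hx
    nlinarith
  have hcoef : ∀ i, |⟪x, e i⟫| ≤ ((K : ℝ) - 1 / 2) * δ := by
    intro i
    calc |⟪x, e i⟫| ≤ ‖x‖ * ‖e i‖ := abs_real_inner_le_norm x (e i)
      _ = ‖x‖ := by rw [hunit i, mul_one]
      _ ≤ _ := hx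
  have hstab : ∀ n : Fin (N + 1), |u n| ≤ δ / 2 := by
    intro n
    induction n using Fin.induction with
    | zero => rw [hu0]; simp; linarith
    | succ i ih =>
      have hw : |u i.castSucc + ⟪x, e (p i)⟫| ≤ (K : ℝ) * δ := by
        calc _ ≤ |u i.castSucc| + |⟪x, e (p i)⟫| := abs_add_le _ _
          _ ≤ δ / 2 + ((K : ℝ) - 1 / 2) * δ := add_le_add ih (hcoef _)
          _ = (K : ℝ) * δ := by ring
      obtain ⟨a, ha, hnear⟩ := midrise_near hδ hK1 hw
      rw [hrec i]
      exact le_trans (hmin i a ha) hnear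
  have key : ∀ y : EuclideanSpace ℝ (Fin d),
      ∑ i, ⟪x, e i⟫ * ⟪y, e i⟫ = ((N : ℝ) / d) * ⟪x, y⟫ := by
    intro y
    have h1 := htight (x + y)
    have h2 := htight x
    have h3 := htight y
    have hexp : ∑ i, ⟪x + y, e i⟫ ^ 2
        = ∑ i, ⟪x, e i⟫ ^ 2 + 2 * ∑ i, ⟪x, e i⟫ * ⟪y, e i⟫ + ∑ i, ⟪y, e i⟫ ^ 2 := by
      rw [Finset.mul_sum, ← Finset.sum_add_distrib, ← Finset.sum_add_distrib]
      apply Finset.sum_congr rfl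
      intro i _
      rw [inner_add_left]
      ring
    rw [hexp, norm_add_sq_real] at h1
    linear_combination (h1 - h2 - h3) / 2
  have hrecon : (∑ i, ⟪x, e i⟫ • e i) = ((N : ℝ) / d) • x := by
    apply ext_inner_right ℝ
    intro v
    calc ⟪∑ i, ⟪x, e i⟫ • e i, v⟫ = ∑ i, ⟪x, e i⟫ * ⟪v, e i⟫ := by
          rw [sum_inner]
          apply Finset.sum_congr rfl
          intro i _
          rw [real_inner_smul_left, real_inner_comm v (e i)]
      _ = ((N : ℝ) / d) * ⟪x, v⟫ := key v
      _ = ⟪((N : ℝ) / d) • x, v⟫ := (real_inner_smul_left _ _ _).symm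
  have hd0 : (0 : ℝ) < d := by exact_mod_cast hd
  have hN0 : (0 : ℝ) < N := by exact_mod_cast hN
  have hx' : x = ((d : ℝ) / N) • ∑ i, ⟪x, e i⟫ • e i := by
    rw [hrecon, smul_smul]
    have h1 : (d : ℝ) / N * ((N : ℝ) / d) = 1 := by field_simp
    rw [h1, one_smul]
  have hsum : x - ((d : ℝ) / N) • ∑ n, q n • e (p n)
      = ((d : ℝ) / N) • ∑ n, (⟪x, e (p n)⟫ - q n) • e (p n) := by
    conv_lhs => rw [hx']
    rw [← smul_sub]
    congr 1
    rw [← Equiv.sum_comp p (fun i => ⟪x, e i⟫ • e i), ← Finset.sum_sub_distrib]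
    apply Finset.sum_congr rfl
    intro n _
    rw [sub_smul]
  obtain ⟨M, rfl⟩ : ∃ M, N = M + 1 := ⟨N - 1, by omega⟩
  set U : ℕ → ℝ := fun k => if h : k ≤ M + 1 then u ⟨k, by omega⟩ else 0 with hU
  set V : ℕ → EuclideanSpace ℝ (Fin d) :=
    fun k => if h : k < M + 1 then e (p ⟨k, h⟩) else 0 with hV
  have hUcast : ∀ n : Fin (M + 1), U ↑n = u n.castSucc := by
    intro n
    rw [hU]
    simp only []
    rw [dif_pos (by omega : (n : ℕ) ≤ M + 1)]
    congr 1
  have hUsucc : ∀ n : Fin (M + 1), U (↑n + 1) = u n.succ := by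
    intro n
    rw [hU]
    simp only []
    rw [dif_pos (by omega : (n : ℕ) + 1 ≤ M + 1)]
    congr 1
  have hVn : ∀ n : Fin (M + 1), V ↑n = e (p n) := by
    intro n
    rw [hV]
    simp only []
    rw [dif_pos n.isLt]
  have hU0' : U 0 = 0 := by
    rw [hU]
    simp only []
    rw [dif_pos (by omega : 0 ≤ M + 1)]
    exact hu0
  have hstab' : ∀ k : ℕ, k ≤ M → |U (k + 1)| ≤ δ / 2 := by
    intro k hk
    rw [hU]
    simp only []
    rw [dif_pos (by omega : k + 1 ≤ M + 1)]
    exact hstab _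
  have hfin : ∑ n : Fin (M + 1), (⟪x, e (p n)⟫ - q n) • e (p n)
      = ∑ k ∈ Finset.range (M + 1), (U (k + 1) - U k) • V k := by
    rw [← Fin.sum_univ_eq_sum_range (fun k => (U (k + 1) - U k) • V k) (M + 1)]
    apply Finset.sum_congr rfl
    intro n _
    rw [hUsucc n, hUcast n, hVn n, hrec n]
    congr 1
    ring
  have habel := abel_sum U V hU0' M
  have hσ : frameVar (fun i => e (p i)) = ∑ k ∈ Finset.range M, ‖V k - V (k + 1)‖ := by
    show (∑ i : Fin M, ‖e (p i.castSucc) - e (p i.succ)‖) = _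
    rw [← Fin.sum_univ_eq_sum_range (fun k => ‖V k - V (k + 1)‖) M]
    apply Finset.sum_congr rfl
    intro i _
    have h1 : V ↑i = e (p i.castSucc) := by
      rw [hV]; simp only []
      rw [dif_pos (by omega : (i : ℕ) < M + 1)]
      congr 1
    have h2 : V (↑i + 1) = e (p i.succ) := by
      rw [hV]; simp only []
      rw [dif_pos (by omega : (i : ℕ) + 1 < M + 1)]
      congr 1
    rw [h1, h2]
  have hσ0 : 0 ≤ ∑ k ∈ Finset.range M, ‖V k - V (k + 1)‖ :=
    Finset.sum_nonneg fun _ _ => norm_nonneg _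
  have hbound : ‖(∑ k ∈ Finset.range M, U (k + 1) • (V k - V (k + 1))) + U (M + 1) • V M‖
      ≤ δ / 2 * (∑ k ∈ Finset.range M, ‖V k - V (k + 1)‖) + δ / 2 := by
    refine le_trans (norm_add_le _ _) (add_le_add ?_ ?_)
    · refine le_trans (norm_sum_le _ _) ?_
      rw [Finset.mul_sum]
      apply Finset.sum_le_sum
      intro k hk
      rw [norm_smul, Real.norm_eq_abs]
      exact mul_le_mul_of_nonneg_right
        (hstab' k (Nat.le_of_lt (Finset.mem_range.mp hk))) (norm_nonneg _)
    · rw [norm_smul, Real.norm_eq_abs]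
      have hVM : ‖V M‖ = 1 := by
        rw [hV]; simp only []
        rw [dif_pos (by omega : M < M + 1)]
        exact hunit _
      rw [hVM, mul_one]
      exact hstab' M le_rfl
  rw [hsum, hfin, habel, norm_smul, Real.norm_eq_abs, hσ,
    abs_of_pos (by positivity : (0 : ℝ) < (d : ℝ) / (M + 1 : ℕ))]
  calc (d : ℝ) / (M + 1 : ℕ)
        * ‖(∑ k ∈ Finset.range M, U (k + 1) • (V k - V (k + 1))) + U (M + 1) • V M‖
      ≤ (d : ℝ) / (M + 1 : ℕ)
        * (δ / 2 * (∑ k ∈ Finset.range M, ‖V k - V (k + 1)‖) + δ / 2) :=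
        mul_le_mul_of_nonneg_left hbound (by positivity)
    _ = δ * d / (2 * (M + 1 : ℕ)) * ((∑ k ∈ Finset.range M, ‖V k - V (k + 1)‖) + 1) := by
        push_cast
        field_simp
end

section
/- Let d ≥ 3 and let e_1, ..., e_N be N points in the cube [−1/2, 1/2]^d ⊂ ℝ^d. Then there exists a permutation p of {1, ..., N} such that Σ_{i=1}^{N−1} ‖e_{p(i)} − e_{p(i+1)}‖ ≤ 2√(d+3) N^{1 − 1/d} − 2√(d+3), where ‖·‖ is the Euclidean norm on ℝ^d. -/
open scoped RealInnerProductSpace BigOperators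

namespace Stmt1Aux

/-- Boustrophedon (snake) key of a cell in the grid `{0,…,n-1}^d`. -/
def skey (n : ℕ) : ℕ → (ℕ → ℕ) → ℕ
  | 0, _ => 0
  | d + 1, a =>
      a d * n ^ d + (if a d % 2 = 0 then skey n d a else n ^ d - 1 - skey n d a)

lemma skey_lt (n : ℕ) (hn : 0 < n) :
    ∀ d (a : ℕ → ℕ), (∀ j, j < d → a j < n) → skey n d a < n ^ d := by
  intro d
  induction d with
  | zero => intro a _; simp [skey]
  | succ d ih =>
    intro a ha
    have h1 : skey n d a < n ^ d := ih a fun j hj => ha j (by omega)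
    have h2 : a d < n := ha d (by omega)
    have hM : 0 < n ^ d := pow_pos hn d
    have hr : (if a d % 2 = 0 then skey n d a else n ^ d - 1 - skey n d a) ≤ n ^ d - 1 := by
      split <;> omega
    have hmul : a d * n ^ d ≤ (n - 1) * n ^ d :=
      Nat.mul_le_mul_right _ (by omega)
    have hpow : n ^ (d + 1) = n * n ^ d := by ring
    simp only [skey]
    have hn1 : (n - 1) * n ^ d + n ^ d = n * n ^ d := by
      have : n - 1 + 1 = n := Nat.succ_pred_eq_of_pos hn
      calc (n - 1) * n ^ d + n ^ d = (n - 1 + 1) * n ^ d := by ring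
        _ = n * n ^ d := by rw [this]
    omega

/-- Key step for the snake-distance lemma, with everything in `ℤ`. -/
lemma skey_step (M A B ka kb ra rb S : ℤ)
    (hM : 1 ≤ M) (hka : 0 ≤ ka) (hka' : ka ≤ M - 1) (hkb : 0 ≤ kb) (hkb' : kb ≤ M - 1)
    (hS : 0 ≤ S) (hS' : S ≤ |ka - kb|)
    (hra : ra = ka ∨ ra = M - 1 - ka) (hrb : rb = kb ∨ rb = M - 1 - kb)
    (hAB : A < B)
    (hadj : B = A + 1 → (ra = ka ∧ rb = M - 1 - kb) ∨ (ra = M - 1 - ka ∧ rb = kb)) :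
    S + (B - A) ≤ (B * M + rb) - (A * M + ra) := by
  have habs : |ka - kb| ≤ M - 1 := abs_le.mpr ⟨by linarith, by linarith⟩
  rcases abs_cases (ka - kb) with ⟨he, _⟩ | ⟨he, _⟩ <;> rw [he] at hS' <;>
  · by_cases hB : B = A + 1
    · rcases hadj hB with ⟨h1, h2⟩ | ⟨h1, h2⟩ <;> subst h1 h2 hB <;> nlinarith
    · have h2 : A + 2 ≤ B := by omega
      have hra' : 0 ≤ ra ∧ ra ≤ M - 1 := by rcases hra with h | h <;> omega
      have hrb' : 0 ≤ rb ∧ rb ≤ M - 1 := by rcases hrb with h | h <;> omega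
      nlinarith [mul_nonneg (by linarith : (0:ℤ) ≤ B - A - 2) (by linarith : (0:ℤ) ≤ M - 1)]


/-- Cast of the unfolded snake key. -/
lemma skey_succ_cast (n d : ℕ) (hn : 0 < n) (a : ℕ → ℕ) (ha : ∀ j, j < d + 1 → a j < n) :
    ((skey n (d + 1) a : ℤ)) = (a d : ℤ) * ((n ^ d : ℕ) : ℤ) +
      (if a d % 2 = 0 then (skey n d a : ℤ) else ((n ^ d : ℕ) : ℤ) - 1 - skey n d a) := by
  have h1 : skey n d a < n ^ d := skey_lt n hn d a fun j hj => ha j (by omega)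
  have e1 : ((n ^ d - 1 - skey n d a : ℕ) : ℤ) = ((n ^ d : ℕ) : ℤ) - 1 - (skey n d a : ℤ) := by
    omega
  simp only [skey]
  rw [Nat.cast_add, Nat.cast_mul, apply_ite (fun x : ℕ => (x : ℤ)), e1]

lemma skey_dist (n : ℕ) (hn : 0 < n) :
    ∀ d (a b : ℕ → ℕ), (∀ j, j < d → a j < n) → (∀ j, j < d → b j < n) →
      (∑ j ∈ Finset.range d, |(a j : ℤ) - (b j : ℤ)|) ≤
        |(skey n d a : ℤ) - (skey n d b : ℤ)| := by
  intro d
  induction d with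
  | zero => intro a b _ _; simp [skey]
  | succ d ih =>
    intro a b ha hb
    have ha' : ∀ j, j < d → a j < n := fun j hj => ha j (by omega)
    have hb' : ∀ j, j < d → b j < n := fun j hj => hb j (by omega)
    have hS := ih a b ha' hb'
    have hka : skey n d a < n ^ d := skey_lt n hn d a ha'
    have hkb : skey n d b < n ^ d := skey_lt n hn d b hb'
    have hM : (1:ℤ) ≤ ((n ^ d : ℕ) : ℤ) := by
      have := pow_pos hn d; omega
    rw [Finset.sum_range_succ, skey_succ_cast n d hn a ha, skey_succ_cast n d hn b hb]
    have main : ∀ (x y : ℕ → ℕ), (∀ j, j < d → x j < n) → (∀ j, j < d → y j < n) →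
        x d < y d →
        (∑ j ∈ Finset.range d, |(x j : ℤ) - (y j : ℤ)|) + ((y d : ℤ) - x d) ≤
          ((y d : ℤ) * ((n ^ d : ℕ) : ℤ) +
            (if y d % 2 = 0 then (skey n d y : ℤ) else ((n ^ d : ℕ) : ℤ) - 1 - skey n d y)) -
          ((x d : ℤ) * ((n ^ d : ℕ) : ℤ) +
            (if x d % 2 = 0 then (skey n d x : ℤ) else ((n ^ d : ℕ) : ℤ) - 1 - skey n d x)) := by
      intro x y hx hy hxy
      have hkx : skey n d x < n ^ d := skey_lt n hn d x hx
      have hky : skey n d y < n ^ d := skey_lt n hn d y hy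
      refine skey_step ((n ^ d : ℕ) : ℤ) (x d) (y d) (skey n d x) (skey n d y) _ _ _
        hM (by positivity) (by omega)
        (by positivity) (by omega)
        (Finset.sum_nonneg fun j _ => abs_nonneg _) (ih x y hx hy)
        (by split <;> [left; right] <;> rfl)
        (by split <;> [left; right] <;> rfl)
        (by exact_mod_cast hxy) ?_
      intro hyx
      have hyx' : y d = x d + 1 := by exact_mod_cast hyx
      rcases Nat.even_or_odd (x d) with hpar | hpar
      · have hx2 : x d % 2 = 0 := Nat.even_iff.mp hpar
        left
        constructor
        · rw [if_pos hx2]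
        · rw [if_neg (by omega)]
      · have hx2 : x d % 2 = 1 := Nat.odd_iff.mp hpar
        right
        constructor
        · rw [if_neg (by omega)]
        · rw [if_pos (by omega)]
    rcases lt_trichotomy (a d) (b d) with h | h | h
    · have hthis := main a b ha' hb' h
      have habs : |(a d : ℤ) - b d| = (b d : ℤ) - a d := by
        rw [abs_sub_comm]; exact abs_of_nonneg (by omega)
      rw [habs]
      exact hthis.trans ((le_abs_self _).trans (le_of_eq (abs_sub_comm _ _)))
    · have hsum : |(a d : ℤ) - b d| = 0 := by rw [h]; simp
      rw [hsum, add_zero, h]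
      have hdiff : ((b d : ℤ) * ((n ^ d : ℕ) : ℤ) +
            (if b d % 2 = 0 then (skey n d a : ℤ) else ((n ^ d : ℕ) : ℤ) - 1 - skey n d a)) -
          ((b d : ℤ) * ((n ^ d : ℕ) : ℤ) +
            (if b d % 2 = 0 then (skey n d b : ℤ) else ((n ^ d : ℕ) : ℤ) - 1 - skey n d b)) =
          (if b d % 2 = 0 then (skey n d a : ℤ) - skey n d b
            else (skey n d b : ℤ) - skey n d a) := by
        split <;> ring
      rw [hdiff]
      split
      · exact hS
      · exact hS.trans_eq (abs_sub_comm _ _)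
    · have hthis := main b a hb' ha' h
      have hsum2 : (∑ j ∈ Finset.range d, |(b j : ℤ) - (a j : ℤ)|) =
          ∑ j ∈ Finset.range d, |(a j : ℤ) - (b j : ℤ)| :=
        Finset.sum_congr rfl fun j _ => abs_sub_comm _ _
      rw [hsum2] at hthis
      have habs : |(a d : ℤ) - b d| = (a d : ℤ) - b d := abs_of_nonneg (by omega)
      rw [habs]
      exact hthis.trans (le_abs_self _)

noncomputable def cell (n d : ℕ) (x : EuclideanSpace ℝ (Fin d)) (j : ℕ) : ℕ :=
  if h : j < d then min (n - 1) (⌊(x ⟨j, h⟩ + 1/2) * n⌋.toNat) else 0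

lemma cell_lt {n d : ℕ} (hn : 0 < n) (x : EuclideanSpace ℝ (Fin d)) :
    ∀ j, j < d → cell n d x j < n := by
  intro j hj
  simp only [cell, dif_pos hj]
  omega

lemma cell_bounds {n d : ℕ} (hn : 0 < n) (x : EuclideanSpace ℝ (Fin d)) (j : Fin d)
    (hx : |x j| ≤ 1 / 2) :
    ((cell n d x j : ℝ)) ≤ (x j + 1 / 2) * n ∧ (x j + 1 / 2) * n ≤ (cell n d x j : ℝ) + 1 := by
  have hxj := abs_le.mp hx
  set y : ℝ := (x j + 1 / 2) * n with hy
  have hy0 : 0 ≤ y := by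
    apply mul_nonneg (by linarith) (by positivity)
  have hyn : y ≤ n := by
    have : x j + 1 / 2 ≤ 1 := by linarith
    calc y ≤ 1 * n := by apply mul_le_mul_of_nonneg_right this (by positivity)
      _ = n := one_mul _
  have hfl0 : 0 ≤ ⌊y⌋ := Int.floor_nonneg.mpr hy0
  have hcell : cell n d x j = min (n - 1) (⌊y⌋.toNat) := by
    simp only [cell, dif_pos j.isLt, Fin.eta, hy]
  rcases le_or_gt (⌊y⌋.toNat) (n - 1) with hc | hc
  · have hmin : cell n d x j = ⌊y⌋.toNat := by rw [hcell]; omega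
    rw [hmin]
    have hcast : ((⌊y⌋.toNat : ℕ) : ℝ) = ((⌊y⌋ : ℤ) : ℝ) := by
      exact_mod_cast Int.toNat_of_nonneg hfl0
    constructor
    · calc ((⌊y⌋.toNat : ℕ) : ℝ) = ((⌊y⌋ : ℤ) : ℝ) := hcast
        _ ≤ y := Int.floor_le y
    · calc y ≤ ⌊y⌋ + 1 := (Int.lt_floor_add_one y).le
        _ = ((⌊y⌋.toNat : ℕ) : ℝ) + 1 := by rw [hcast]
  · have hmin : cell n d x j = n - 1 := by rw [hcell]; omega
    rw [hmin]
    have hcast : ((n - 1 : ℕ) : ℝ) = (n : ℝ) - 1 := by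
      have : (1:ℕ) ≤ n := hn
      push_cast [Nat.cast_sub this]
      ring
    rw [hcast]
    have h1 : (n : ℤ) ≤ ⌊y⌋ := by omega
    have h2 : ((n : ℝ)) ≤ ((⌊y⌋ : ℤ) : ℝ) := by exact_mod_cast h1
    have h3 := h2.trans (Int.floor_le y)
    exact ⟨by linarith, by linarith⟩

lemma step_norm {n d : ℕ} (hn : 0 < n) (hd : 1 ≤ d) (x z : EuclideanSpace ℝ (Fin d))
    (hx : ∀ j, |x j| ≤ 1 / 2) (hz : ∀ j, |z j| ≤ 1 / 2) :
    ‖x - z‖ ≤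
      (((∑ j ∈ Finset.range d, |(cell n d x j : ℤ) - (cell n d z j : ℤ)| : ℤ) : ℝ)
        + Real.sqrt d) / n := by
  have hnR : (0:ℝ) < n := by positivity
  have hd1 : (1:ℝ) ≤ Real.sqrt d := by
    rw [show (1:ℝ) = Real.sqrt 1 by simp]
    exact Real.sqrt_le_sqrt (by exact_mod_cast hd)
  have hsq : Real.sqrt d ^ 2 = (d:ℝ) := Real.sq_sqrt (by positivity)
  set m : Fin d → ℝ := fun j => |((cell n d x j : ℝ)) - ((cell n d z j : ℝ))| with hm
  set S : ℝ := ∑ j : Fin d, m j with hSdef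
  have hmnn : ∀ j, 0 ≤ m j := fun j => abs_nonneg _
  have hSnn : 0 ≤ S := Finset.sum_nonneg fun j _ => hmnn j
  have hScast :
      ((∑ j ∈ Finset.range d, |(cell n d x j : ℤ) - (cell n d z j : ℤ)| : ℤ) : ℝ) = S := by
    rw [hSdef, hm, Fin.sum_univ_eq_sum_range
      (fun j => |((cell n d x j : ℝ)) - ((cell n d z j : ℝ))|) d]
    push_cast
    rfl
  rw [hScast]
  -- coordinatewise bound
  have hcoord : ∀ j : Fin d, |x j - z j| ≤ (m j + 1) / n := by
    intro j
    obtain ⟨hx1, hx2⟩ := cell_bounds hn x j (hx j)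
    obtain ⟨hz1, hz2⟩ := cell_bounds hn z j (hz j)
    have hne : (n:ℝ) ≠ 0 := ne_of_gt hnR
    have hub : ((cell n d x ↑j : ℝ)) - ((cell n d z ↑j : ℝ)) ≤ m j := le_abs_self _
    have hlb : -(m j) ≤ ((cell n d x ↑j : ℝ)) - ((cell n d z ↑j : ℝ)) := neg_abs_le _
    have e1 : x j - z j = ((x j + 1/2) * n - (z j + 1/2) * n) / n := by
      field_simp
      ring
    have key : |(x j + 1/2) * n - (z j + 1/2) * n| ≤ m j + 1 := by
      rw [abs_le]
      constructor <;> linarith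
    rw [e1, abs_div, abs_of_pos hnR]
    gcongr
  -- sum of squares bound
  have hnorm : ‖x - z‖ = Real.sqrt (∑ j : Fin d, (x j - z j) ^ 2) := by
    rw [EuclideanSpace.norm_eq]
    congr 1
    refine Finset.sum_congr rfl fun j _ => ?_
    rw [show (x - z) j = x j - z j from rfl]
    rw [Real.norm_eq_abs, sq_abs]
  have hsum1 : (∑ j : Fin d, (x j - z j) ^ 2) ≤ ∑ j : Fin d, ((m j + 1) / n) ^ 2 := by
    refine Finset.sum_le_sum fun j _ => ?_
    have h1 := hcoord j
    have h2 : 0 ≤ (m j + 1) / n := by positivity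
    calc (x j - z j) ^ 2 = |x j - z j| ^ 2 := (sq_abs _).symm
      _ ≤ ((m j + 1) / n) ^ 2 := by apply pow_le_pow_left₀ (abs_nonneg _) h1
  have hsum2 : (∑ j : Fin d, ((m j + 1) / n) ^ 2) ≤ ((S + Real.sqrt d) / n) ^ 2 := by
    have expand : ∀ j : Fin d, ((m j + 1) / n) ^ 2 = (m j ^ 2 + 2 * m j + 1) / n ^ 2 := by
      intro j; field_simp; ring
    simp only [expand]
    rw [← Finset.sum_div, div_pow, div_le_div_iff₀ (by positivity) (by positivity)]
    have hmsq : (∑ j : Fin d, m j ^ 2) ≤ S ^ 2 := by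
      rw [hSdef]
      exact Finset.sum_sq_le_sq_sum_of_nonneg fun j _ => hmnn j
    have hcard : (∑ _j : Fin d, (1:ℝ)) = (d:ℝ) := by simp
    have hexp : (∑ j : Fin d, (m j ^ 2 + 2 * m j + 1)) = 
        (∑ j : Fin d, m j ^ 2) + 2 * S + (d:ℝ) := by
      rw [Finset.sum_add_distrib, Finset.sum_add_distrib, ← Finset.mul_sum, hcard, hSdef]
    rw [hexp]
    have h2S : 2 * S ≤ 2 * Real.sqrt d * S := by nlinarith
    nlinarith
  rw [hnorm]
  have hrhs : 0 ≤ (S + Real.sqrt d) / n := by positivity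
  calc Real.sqrt (∑ j : Fin d, (x j - z j) ^ 2)
      ≤ Real.sqrt (((S + Real.sqrt d) / n) ^ 2) := Real.sqrt_le_sqrt (hsum1.trans hsum2)
    _ = (S + Real.sqrt d) / n := Real.sqrt_sq hrhs


lemma le_of_sq_le' (a b : ℝ) (ha : 0 ≤ a) (hb : 0 ≤ b) (h : a ^ 2 ≤ b ^ 2) : a ≤ b := by
  calc a = Real.sqrt (a ^ 2) := (Real.sqrt_sq ha).symm
    _ ≤ Real.sqrt (b ^ 2) := Real.sqrt_le_sqrt h
    _ = b := Real.sqrt_sq hb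

lemma natpow (d : ℕ) (hd : 4 ≤ d) : d + 7 ≤ 2 ^ d := by
  induction d, hd using Nat.le_induction with
  | base => norm_num
  | succ d hd ih =>
    rw [pow_succ]
    omega

/-- Case `n = 1` arithmetic: trivial path bound suffices. -/
lemma arith1 (d : ℕ) (hd : 3 ≤ d) (σ : ℝ) (h1 : 1 ≤ σ) (h2 : σ ≤ 2) :
    (σ ^ d - 1) * Real.sqrt d ≤ 2 * Real.sqrt ((d : ℝ) + 3) * (σ ^ (d - 1) - 1) := by
  set D : ℝ := (d : ℝ) with hD
  have hD3 : (3 : ℝ) ≤ D := by rw [hD]; exact_mod_cast hd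
  set s : ℝ := Real.sqrt D with hs
  set u : ℝ := Real.sqrt (D + 3) with hu
  have hs0 : 0 ≤ s := Real.sqrt_nonneg _
  have hu0 : 0 ≤ u := Real.sqrt_nonneg _
  have hs2 : s ^ 2 = D := Real.sq_sqrt (by linarith)
  have hu2 : u ^ 2 = D + 3 := Real.sq_sqrt (by linarith)
  set P : ℝ := σ ^ (d - 1) with hP
  have hP1 : 1 ≤ P := one_le_pow₀ h1
  have hB : 1 + (D - 1) * (σ - 1) ≤ P := by
    have hben := one_add_mul_le_pow (a := σ - 1) (by linarith) (d - 1)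
    have hcast : ((d - 1 : ℕ) : ℝ) = D - 1 := by
      have h1d : (1:ℕ) ≤ d := by omega
      push_cast [Nat.cast_sub h1d]
      ring
    calc 1 + (D - 1) * (σ - 1) = 1 + ((d - 1 : ℕ) : ℝ) * (σ - 1) := by rw [hcast]
      _ ≤ (1 + (σ - 1)) ^ (d - 1) := hben
      _ = P := by norm_num [hP]
  have hσd : σ ^ d = σ * P := by
    rw [hP, ← pow_succ']
    congr 1
    omega
  have hc1 : σ ^ d - 1 ≤ 2 * (P - 1) + (σ - 1) := by
    rw [hσd]
    nlinarith [mul_nonneg (by linarith : (0:ℝ) ≤ 2 - σ) (by linarith : (0:ℝ) ≤ P - 1)]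
  have key : (2 * D - 1) * s ≤ 2 * u * (D - 1) := by
    apply le_of_sq_le' _ _ (by nlinarith) (by nlinarith)
    have hpoly : (0:ℝ) ≤ 8 * D ^ 2 - 21 * D + 12 := by nlinarith [sq_nonneg (D - 3)]
    calc ((2 * D - 1) * s) ^ 2 = (2 * D - 1) ^ 2 * D := by rw [mul_pow, hs2]
      _ ≤ 4 * (D + 3) * (D - 1) ^ 2 := by nlinarith
      _ = (2 * u * (D - 1)) ^ 2 := by rw [mul_pow, mul_pow, hu2]; ring
  have h3 : (σ - 1) * (D - 1) ≤ P - 1 := by nlinarith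
  -- combine, multiplying by (D-1) > 0
  have hD1 : (0:ℝ) < D - 1 := by linarith
  apply le_of_mul_le_mul_right _ hD1
  have e1 : (σ ^ d - 1) * s * (D - 1) ≤ (2 * (P - 1) + (σ - 1)) * s * (D - 1) := by
    apply mul_le_mul_of_nonneg_right _ hD1.le
    exact mul_le_mul_of_nonneg_right hc1 hs0
  have e2 : (2 * (P - 1) + (σ - 1)) * s * (D - 1) ≤ (P - 1) * ((2 * D - 1) * s) := by
    have : (2 * (P - 1) + (σ - 1)) * (D - 1) ≤ (P - 1) * (2 * D - 1) := by nlinarith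
    calc (2 * (P - 1) + (σ - 1)) * s * (D - 1)
        = ((2 * (P - 1) + (σ - 1)) * (D - 1)) * s := by ring
      _ ≤ ((P - 1) * (2 * D - 1)) * s := mul_le_mul_of_nonneg_right this hs0
      _ = (P - 1) * ((2 * D - 1) * s) := by ring
  have e3 : (P - 1) * ((2 * D - 1) * s) ≤ (P - 1) * (2 * u * (D - 1)) :=
    mul_le_mul_of_nonneg_left key (by linarith)
  calc (σ ^ d - 1) * s * (D - 1) ≤ (P - 1) * (2 * u * (D - 1)) := by linarith
    _ = 2 * u * (P - 1) * (D - 1) := by ring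

/-- Crux coefficient inequality for `n ≥ 2`. -/
lemma crux (d n : ℕ) (hd : 3 ≤ d) (hn : 2 ≤ n) :
    2 * Real.sqrt ((d : ℝ) + 3) ≤
      (2 * Real.sqrt ((d : ℝ) + 3) - Real.sqrt d * ((n : ℝ) + 1) / n - 1) * (n : ℝ) ^ (d - 1) := by
  set D : ℝ := (d : ℝ) with hD
  have hD3 : (3 : ℝ) ≤ D := by rw [hD]; exact_mod_cast hd
  set s : ℝ := Real.sqrt D with hs
  set u : ℝ := Real.sqrt (D + 3) with hu
  have hs0 : 0 ≤ s := Real.sqrt_nonneg _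
  have hu0 : 0 ≤ u := Real.sqrt_nonneg _
  have hs2 : s ^ 2 = D := Real.sq_sqrt (by linarith)
  have hu2 : u ^ 2 = D + 3 := Real.sq_sqrt (by linarith)
  have hnR : (2:ℝ) ≤ (n : ℝ) := by exact_mod_cast hn
  have hnR0 : (0:ℝ) < n := by linarith
  have hb : s * ((n : ℝ) + 1) / n ≤ 3 / 2 * s := by
    rw [div_le_iff₀ hnR0]
    nlinarith
  have hM : (2:ℝ) ^ (d - 1) ≤ (n : ℝ) ^ (d - 1) := pow_le_pow_left₀ (by norm_num) hnR _
  have hM0 : (0:ℝ) < (n : ℝ) ^ (d - 1) := by positivity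
  rcases eq_or_lt_of_le hd with hd3 | hd4
  · -- d = 3
    have hd3' : d = 3 := hd3.symm
    subst hd3'
    have hDval : D = 3 := by norm_num [hD]
    rw [hDval] at hs2 hu2
    have hu_ub : u ≤ 5 / 2 := by nlinarith [sq_nonneg (u - 5/2)]
    have hs_ub : s ≤ 7 / 4 := by nlinarith [sq_nonneg (s - 7/4)]
    have husum : (0:ℝ) ≤ u + s := by linarith
    have hc3 : 2 * u ≤ (2 * u - 3 / 2 * s - 1) * 4 := by
      nlinarith [mul_nonneg husum husum]
    have hcnn : 0 ≤ 2 * u - 3 / 2 * s - 1 := by linarith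
    have h4 : (4:ℝ) ≤ (n : ℝ) ^ (3 - 1) := by
      calc (4:ℝ) = 2 ^ (3 - 1) := by norm_num
        _ ≤ (n : ℝ) ^ (3 - 1) := hM
    calc 2 * u ≤ (2 * u - 3 / 2 * s - 1) * 4 := hc3
      _ ≤ (2 * u - 3 / 2 * s - 1) * (n : ℝ) ^ (3 - 1) :=
          mul_le_mul_of_nonneg_left h4 hcnn
      _ ≤ (2 * u - s * ((n : ℝ) + 1) / n - 1) * (n : ℝ) ^ (3 - 1) := by
          apply mul_le_mul_of_nonneg_right _ hM0.le
          linarith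
  · -- d ≥ 4
    have hd4' : 4 ≤ d := hd4
    have hD4 : (4:ℝ) ≤ D := by rw [hD]; exact_mod_cast hd4'
    have h6s : 6 * s ≤ 7 / 4 * D + 8 := by nlinarith [sq_nonneg (s - 24/7)]
    have hc1 : 3 / 2 * s + 2 ≤ 2 * u := by
      apply le_of_sq_le' _ _ (by linarith) (by linarith)
      nlinarith
    have h2u : 2 * u ≤ (2:ℝ) ^ (d - 1) := by
      have hu_ub : 2 * u ≤ (D + 7) / 2 := by nlinarith [sq_nonneg (u - 2)]
      have hnat : (D + 7 : ℝ) ≤ 2 ^ d := by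
        have := natpow d hd4'
        calc (D + 7 : ℝ) = ((d + 7 : ℕ) : ℝ) := by push_cast; ring
          _ ≤ ((2 ^ d : ℕ) : ℝ) := by exact_mod_cast this
          _ = 2 ^ d := by push_cast; ring
      have hpow : (2:ℝ) ^ d = 2 ^ (d - 1) * 2 := by
        rw [← pow_succ]
        congr 1
        omega
      linarith [hnat, hpow ▸ hnat]
    calc 2 * u ≤ (2:ℝ) ^ (d - 1) := h2u
      _ ≤ (n : ℝ) ^ (d - 1) := hM
      _ ≤ (2 * u - 3 / 2 * s - 1) * (n : ℝ) ^ (d - 1) :=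
          le_mul_of_one_le_left hM0.le (by linarith)
      _ ≤ (2 * u - s * ((n : ℝ) + 1) / n - 1) * (n : ℝ) ^ (d - 1) := by
          apply mul_le_mul_of_nonneg_right _ hM0.le
          linarith

/-- Case `n ≥ 2` arithmetic. -/
lemma arith2 (d n : ℕ) (hd : 3 ≤ d) (hn : 2 ≤ n) (NR P : ℝ)
    (hN1 : 1 ≤ NR) (hP1 : ((n:ℝ)) ^ (d - 1) ≤ P) (hP2 : NR / ((n:ℝ) + 1) ≤ P) :
    ((n:ℝ) ^ d - 1) / n + (NR - 1) * Real.sqrt d / n ≤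
      2 * Real.sqrt ((d : ℝ) + 3) * P - 2 * Real.sqrt ((d : ℝ) + 3) := by
  set D : ℝ := (d : ℝ) with hD
  have hD3 : (3 : ℝ) ≤ D := by rw [hD]; exact_mod_cast hd
  set s : ℝ := Real.sqrt D with hs
  set u : ℝ := Real.sqrt (D + 3) with hu
  have hs0 : 0 ≤ s := Real.sqrt_nonneg _
  have hu0 : 0 ≤ u := Real.sqrt_nonneg _
  have hnR : (2:ℝ) ≤ (n : ℝ) := by exact_mod_cast hn
  have hnR0 : (0:ℝ) < n := by linarith
  have hM0 : (0:ℝ) < (n : ℝ) ^ (d - 1) := by positivity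
  set b : ℝ := s * ((n : ℝ) + 1) / n with hbdef
  have hbnn : 0 ≤ b := by positivity
  have hcrux := crux d n hd hn
  have hanncoef : 0 ≤ 2 * u - b - 1 := by nlinarith
  have hpowsplit : (n:ℝ) ^ d = (n:ℝ) ^ (d - 1) * n := by
    rw [← pow_succ]
    congr 1
    omega
  -- b * (NR / (n+1)) = s * NR / n
  have hbN : b * (NR / ((n:ℝ) + 1)) = s * NR / n := by
    rw [hbdef]
    field_simp
  have hstep1 : (2 * u - b) * ((n:ℝ) ^ (d - 1)) + b * (NR / ((n:ℝ) + 1)) ≤ 2 * u * P := by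
    have e1 : (2 * u - b) * ((n:ℝ) ^ (d - 1)) ≤ (2 * u - b) * P :=
      mul_le_mul_of_nonneg_left hP1 (by linarith)
    have e2 : b * (NR / ((n:ℝ) + 1)) ≤ b * P := mul_le_mul_of_nonneg_left hP2 hbnn
    nlinarith
  rw [hbN] at hstep1
  -- remaining: (n^d - 1)/n + (NR - 1) s/n + 2u ≤ (2u - b) n^{d-1} + s NR/n
  have hmain : ((n:ℝ) ^ d - 1) / n + (NR - 1) * s / n + 2 * u ≤
      (2 * u - b) * ((n:ℝ) ^ (d - 1)) + s * NR / n := by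
    have e3 : ((n:ℝ) ^ d - 1) / n = (n:ℝ) ^ (d - 1) - 1 / n := by
      rw [hpowsplit]
      field_simp
    have e4 : (NR - 1) * s / n = s * NR / n - s / n := by ring
    rw [e3, e4]
    have e5 : 2 * u ≤ (2 * u - b - 1) * ((n:ℝ) ^ (d - 1)) := hcrux
    have e6 : (0:ℝ) ≤ 1 / n + s / n := by positivity
    nlinarith [e5, e6]
  linarith


/-- Sorted-path total length bound. -/
lemma total_bound {N d n : ℕ} (hn0 : 0 < n) (hd1 : 1 ≤ d) (hN : 0 < N)
    (e : Fin N → EuclideanSpace ℝ (Fin d)) (he : ∀ i, ∀ j : Fin d, |e i j| ≤ 1 / 2) :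
    ∃ p : Equiv.Perm (Fin N),
      (∑ i ∈ Finset.range (N - 1),
        ‖e (p ⟨min i (N - 1), by omega⟩) - e (p ⟨min (i + 1) (N - 1), by omega⟩)‖) ≤
      ((n:ℝ) ^ d - 1) / n + ((N : ℝ) - 1) * Real.sqrt d / n := by
  classical
  have hnR0 : (0:ℝ) < (n:ℝ) := by exact_mod_cast hn0
  set p : Equiv.Perm (Fin N) := Tuple.sort (fun i => skey n d (cell n d (e i))) with hpdef
  have hmono : Monotone ((fun i => skey n d (cell n d (e i))) ∘ p) :=
    Tuple.monotone_sort _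
  refine ⟨p, ?_⟩
  set q : ℕ → Fin N := fun i => p ⟨min i (N - 1), by omega⟩ with hqdef
  set K : ℕ → ℝ := fun i => (skey n d (cell n d (e (q i))) : ℝ) with hKdef
  have hmono' : ∀ i j : ℕ, i ≤ j →
      skey n d (cell n d (e (q i))) ≤ skey n d (cell n d (e (q j))) := by
    intro i j hij
    apply hmono
    simp only [Fin.mk_le_mk]
    omega
  have hKub : ∀ i : ℕ, K i ≤ (n:ℝ) ^ d - 1 := by
    intro i
    have h1 : skey n d (cell n d (e (q i))) + 1 ≤ n ^ d :=
      skey_lt n hn0 d _ (cell_lt hn0 _)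
    have h2 : (skey n d (cell n d (e (q i))) : ℝ) + 1 ≤ (n:ℝ) ^ d := by exact_mod_cast h1
    simp only [hKdef]
    linarith
  have hKlb : 0 ≤ K 0 := by simp only [hKdef]; positivity
  have hstep : ∀ i ∈ Finset.range (N - 1),
      ‖e (q i) - e (q (i + 1))‖ ≤ (K (i + 1) - K i + Real.sqrt d) / n := by
    intro i hi
    refine (step_norm hn0 hd1 (e (q i)) (e (q (i + 1))) (he _) (he _)).trans ?_
    have h2 := skey_dist n hn0 d (cell n d (e (q i))) (cell n d (e (q (i + 1))))
      (cell_lt hn0 _) (cell_lt hn0 _)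
    have h3 := hmono' i (i + 1) (by omega)
    have h4 : |(skey n d (cell n d (e (q i))) : ℤ) -
          (skey n d (cell n d (e (q (i + 1)))) : ℤ)| =
        (skey n d (cell n d (e (q (i + 1)))) : ℤ) - (skey n d (cell n d (e (q i))) : ℤ) := by
      rw [abs_sub_comm, abs_of_nonneg (by omega)]
    have h5 := h2.trans_eq h4
    gcongr (?_ + _) / _
    simp only [hKdef]
    exact_mod_cast h5
  have hNcast : ((N - 1 : ℕ) : ℝ) = (N:ℝ) - 1 := by
    have h1 : 1 ≤ N := hN
    push_cast [Nat.cast_sub h1]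
    ring
  have hconv : ∀ i ∈ Finset.range (N - 1),
      ‖e (p ⟨min i (N - 1), by omega⟩) - e (p ⟨min (i + 1) (N - 1), by omega⟩)‖ =
      ‖e (q i) - e (q (i + 1))‖ := by
    intro i _
    rfl
  calc (∑ i ∈ Finset.range (N - 1),
        ‖e (p ⟨min i (N - 1), by omega⟩) - e (p ⟨min (i + 1) (N - 1), by omega⟩)‖)
      = ∑ i ∈ Finset.range (N - 1), ‖e (q i) - e (q (i + 1))‖ :=
        Finset.sum_congr rfl hconv
    _ ≤ ∑ i ∈ Finset.range (N - 1), (K (i + 1) - K i + Real.sqrt d) / n :=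
        Finset.sum_le_sum hstep
    _ = ((∑ i ∈ Finset.range (N - 1), (K (i + 1) - K i)) + (N - 1 : ℕ) * Real.sqrt d) / n := by
        rw [← Finset.sum_div, Finset.sum_add_distrib, Finset.sum_const, Finset.card_range,
          nsmul_eq_mul]
    _ = ((K (N - 1) - K 0) + (N - 1 : ℕ) * Real.sqrt d) / n := by
        rw [Finset.sum_range_sub K (N - 1)]
    _ = ((K (N - 1) - K 0) + ((N:ℝ) - 1) * Real.sqrt d) / n := by rw [hNcast]
    _ ≤ (((n:ℝ) ^ d - 1) + ((N:ℝ) - 1) * Real.sqrt d) / n := by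
        gcongr (?_ + _) / _
        linarith [hKub (N - 1), hKlb]
    _ = ((n:ℝ) ^ d - 1) / n + ((N:ℝ) - 1) * Real.sqrt d / n := by ring

end Stmt1Aux

open Stmt1Aux in
/-- Wang's bound on the shortest path through `N` points in the
cube `[-1/2, 1/2]^d`, `d ≥ 3`. -/
theorem stmt1 {d N : ℕ} (hd : 3 ≤ d) (hN : 0 < N)
    (e : Fin N → EuclideanSpace ℝ (Fin d))
    (he : ∀ i, ∀ j : Fin d, |e i j| ≤ 1 / 2) :
    ∃ p : Equiv.Perm (Fin N),
      ∑ i : Fin (N - 1), ‖e (p (Fin.castLE (by omega) i.castSucc)) -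
          e (p (Fin.castLE (by omega) i.succ))‖ ≤
        2 * Real.sqrt ((d : ℝ) + 3) * (N : ℝ) ^ (1 - 1 / (d : ℝ)) -
          2 * Real.sqrt ((d : ℝ) + 3) := by
  classical
  have hd1 : 1 ≤ d := by omega
  have hNR1 : (1:ℝ) ≤ (N:ℝ) := by exact_mod_cast hN
  have hNR0 : (0:ℝ) < (N:ℝ) := by linarith
  have hdR0 : (0:ℝ) < (d:ℝ) := by exact_mod_cast (show 0 < d by omega)
  set σ : ℝ := (N:ℝ) ^ ((1:ℝ)/(d:ℝ)) with hσdef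
  have hσ1 : 1 ≤ σ := by
    rw [hσdef, show (1:ℝ) = (N:ℝ) ^ (0:ℝ) by rw [Real.rpow_zero]]
    exact Real.rpow_le_rpow_of_exponent_le hNR1 (by positivity)
  have hσ0 : 0 < σ := by linarith
  have hσd : σ ^ d = (N:ℝ) := by
    rw [hσdef, ← Real.rpow_natCast ((N:ℝ) ^ ((1:ℝ)/(d:ℝ))) d, ← Real.rpow_mul hNR0.le]
    rw [show (1:ℝ)/(d:ℝ) * ((d:ℕ):ℝ) = 1 by field_simp]
    exact Real.rpow_one _
  have hPeq : (N : ℝ) ^ (1 - 1 / (d : ℝ)) = σ ^ (d - 1) := by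
    rw [hσdef, ← Real.rpow_natCast ((N:ℝ) ^ ((1:ℝ)/(d:ℝ))) (d-1), ← Real.rpow_mul hNR0.le]
    congr 1
    have hcast : ((d - 1 : ℕ) : ℝ) = (d:ℝ) - 1 := by
      push_cast [Nat.cast_sub hd1]
      ring
    rw [hcast]
    field_simp
  set n : ℕ := ⌊σ⌋₊ with hndef
  have hn1 : 1 ≤ n := Nat.le_floor (by exact_mod_cast hσ1)
  have hn0 : 0 < n := hn1
  have hnR0 : (0:ℝ) < (n:ℝ) := by exact_mod_cast hn0
  have hnσ : (n:ℝ) ≤ σ := Nat.floor_le hσ0.le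
  have hσn1 : σ < (n:ℝ) + 1 := by exact_mod_cast Nat.lt_floor_add_one σ
  have hPn : (n:ℝ) ^ (d-1) ≤ σ ^ (d-1) := pow_le_pow_left₀ hnR0.le hnσ _
  have hP2 : (N:ℝ) / ((n:ℝ) + 1) ≤ σ ^ (d-1) := by
    rw [div_le_iff₀ (by positivity)]
    have hPσ : σ ^ (d-1) * σ = (N:ℝ) := by
      rw [← pow_succ, show d - 1 + 1 = d by omega, hσd]
    calc (N:ℝ) = σ ^ (d-1) * σ := hPσ.symm
      _ ≤ σ ^ (d-1) * ((n:ℝ) + 1) :=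
          mul_le_mul_of_nonneg_left hσn1.le (by positivity)
  obtain ⟨p, hp⟩ := total_bound (n := n) hn0 hd1 hN e he
  refine ⟨p, ?_⟩
  have hconv : (∑ i : Fin (N - 1), ‖e (p (Fin.castLE (by omega) i.castSucc)) -
          e (p (Fin.castLE (by omega) i.succ))‖) =
      ∑ i ∈ Finset.range (N - 1),
        ‖e (p ⟨min i (N - 1), by omega⟩) - e (p ⟨min (i + 1) (N - 1), by omega⟩)‖ := by
    rw [← Fin.sum_univ_eq_sum_range
      (fun i => ‖e (p ⟨min i (N - 1), by omega⟩) - e (p ⟨min (i + 1) (N - 1), by omega⟩)‖)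
      (N - 1)]
    refine Finset.sum_congr rfl fun i _ => ?_
    have hi := i.isLt
    have h1 : (Fin.castLE (by omega : N - 1 + 1 ≤ N) i.castSucc) =
        (⟨min (i : ℕ) (N - 1), by omega⟩ : Fin N) := by
      apply Fin.ext
      simp only [Fin.coe_castLE, Fin.coe_castSucc]
      omega
    have h2 : (Fin.castLE (by omega : N - 1 + 1 ≤ N) i.succ) =
        (⟨min ((i : ℕ) + 1) (N - 1), by omega⟩ : Fin N) := by
      apply Fin.ext
      simp only [Fin.coe_castLE, Fin.val_succ]
      omega
    rw [h1, h2]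
  rw [hconv]
  refine hp.trans ?_
  rw [hPeq]
  rcases eq_or_lt_of_le hn1 with hn1' | hn2
  · have hne : n = 1 := hn1'.symm
    have hσ2 : σ ≤ 2 := by
      rw [hne] at hσn1
      push_cast at hσn1
      linarith
    have h1 := arith1 d hd σ hσ1 hσ2
    rw [hσd] at h1
    rw [hne]
    push_cast
    calc ((1:ℝ) ^ d - 1) / 1 + ((N:ℝ) - 1) * Real.sqrt d / 1
        = ((N:ℝ) - 1) * Real.sqrt d := by simp
      _ ≤ 2 * Real.sqrt ((d : ℝ) + 3) * (σ ^ (d - 1) - 1) := h1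
      _ = 2 * Real.sqrt ((d:ℝ) + 3) * σ ^ (d-1) - 2 * Real.sqrt ((d:ℝ)+3) := by ring
  · exact arith2 d n hd hn2 (N:ℝ) (σ ^ (d-1)) hNR1 hPn hP2
end

section
/- Let F = {e_1, ..., e_N} be a finite set of unit-norm vectors in ℝ^d with d ≥ 3. Then there exists a permutation p of {1, ..., N} such that σ(F, p) ≤ 4√(d+3) N^{1 − 1/d} − 4√(d+3), where σ(F, p) = Σ_{i=1}^{N−1} ‖e_{p(i)} − e_{p(i+1)}‖ is the frame variation of F with respect to p. -/
open scoped RealInnerProductSpace BigOperators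

set_option maxHeartbeats 1000000

namespace BO
open Finset

def reflect (M a p : ℕ) : ℕ := if p % 2 = 0 then a else M - 1 - a

def snake (M : ℕ) : (d : ℕ) → ℕ → Fin d → ℕ
  | 0, _ => finZeroElim
  | d+1, j => Fin.cons (reflect M (j % M) (j / M)) (snake M d (j / M))

def sidx (M : ℕ) : (d : ℕ) → (Fin d → ℕ) → ℕ
  | 0, _ => 0
  | d+1, c => sidx M d (Fin.tail c) * M + reflect M (c 0) (sidx M d (Fin.tail c))

lemma reflect_lt {M a p : ℕ} (ha : a < M) : reflect M a p < M := by
  unfold reflect; split <;> omega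

lemma reflect_reflect {M a p : ℕ} (ha : a < M) : reflect M (reflect M a p) p = a := by
  unfold reflect; split <;> omega

lemma div_helper (s M r : ℕ) (h : r < M) : (s * M + r) / M = s := by
  rw [add_comm, Nat.add_mul_div_right _ _ (by omega : 0 < M), Nat.div_eq_of_lt h, zero_add]

lemma mod_helper (s M r : ℕ) (h : r < M) : (s * M + r) % M = r := by
  rw [add_comm, Nat.add_mul_mod_self_right]; exact Nat.mod_eq_of_lt h

lemma sidx_lt (M : ℕ) : ∀ d (c : Fin d → ℕ), (∀ i, c i < M) → sidx M d c < M ^ d := by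
  intro d
  induction d with
  | zero => intro c _; simp [sidx]
  | succ d ih =>
    intro c hc
    have h1 : sidx M d (Fin.tail c) < M ^ d := ih _ (fun i => hc i.succ)
    have h2 : reflect M (c 0) (sidx M d (Fin.tail c)) < M := reflect_lt (hc 0)
    have hM : 0 < M := lt_of_le_of_lt (Nat.zero_le _) (hc 0)
    calc sidx M (d+1) c = sidx M d (Fin.tail c) * M + reflect M (c 0) (sidx M d (Fin.tail c)) := rfl
    _ < M ^ d * M := by nlinarith
    _ = M ^ (d+1) := by ring

lemma snake_sidx (M : ℕ) : ∀ d (c : Fin d → ℕ), (∀ i, c i < M) → snake M d (sidx M d c) = c := by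
  intro d
  induction d with
  | zero => intro c _; funext i; exact i.elim0
  | succ d ih =>
    intro c hc
    have hrM : reflect M (c 0) (sidx M d (Fin.tail c)) < M := reflect_lt (hc 0)
    have key : sidx M (d+1) c
        = sidx M d (Fin.tail c) * M + reflect M (c 0) (sidx M d (Fin.tail c)) := rfl
    have hz : ∀ k, snake M (d+1) k
        = Fin.cons (reflect M (k % M) (k / M)) (snake M d (k / M)) := fun _ => rfl
    rw [hz, key, div_helper _ _ _ hrM, mod_helper _ _ _ hrM, reflect_reflect (hc 0),
      ih (Fin.tail c) (fun i => hc i.succ), Fin.cons_self_tail]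

lemma snake_step (M : ℕ) (hM : 0 < M) :
    ∀ d j, j + 1 < M ^ d →
      ∑ i : Fin d, |((snake M d (j+1) i : ℝ)) - snake M d j i| ≤ 1 := by
  intro d
  induction d with
  | zero => intro j hj; simp at hj
  | succ d ih =>
    intro j hj
    have hz : ∀ k, snake M (d+1) k 0 = reflect M (k % M) (k / M) := fun _ => rfl
    have hsucc : ∀ k (i : Fin d), snake M (d+1) k i.succ = snake M d (k / M) i :=
      fun _ _ => rfl
    rw [Fin.sum_univ_succ]
    simp only [hz, hsucc]
    rcases Nat.lt_or_ge (j % M + 1) M with hc | hc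
    · -- no carry
      have e1 : j = j / M * M + j % M := (Nat.div_add_mod' j M).symm
      have hdiv : (j + 1) / M = j / M := by
        conv_lhs => rw [e1]
        rw [add_assoc, div_helper _ _ _ hc]
      have hmod : (j + 1) % M = j % M + 1 := by
        conv_lhs => rw [e1]
        rw [add_assoc, mod_helper _ _ _ hc]
      have hhead : |((reflect M (j % M + 1) (j / M) : ℕ) : ℝ) -
          (reflect M (j % M) (j / M) : ℕ)| = 1 := by
        unfold reflect
        split
        · push_cast; simp
        · have h1 : j % M + 1 ≤ M - 1 := by omega
          have h2 : M - 1 - j % M = (M - 1 - (j % M + 1)) + 1 := by omega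
          rw [h2]
          push_cast
          rw [abs_of_nonpos (by linarith)]
          ring
      rw [hmod, hdiv, hhead]
      simp
    · -- carry
      have hjm : j % M = M - 1 := by have := Nat.mod_lt j hM; omega
      have e1 : j = j / M * M + (M - 1) := by rw [← hjm]; exact (Nat.div_add_mod' j M).symm
      have e2 : j + 1 = (j / M + 1) * M := by
        have h : M - 1 + 1 = M := by omega
        calc j + 1 = j / M * M + (M - 1) + 1 := by rw [← e1]
        _ = j / M * M + M := by rw [add_assoc, h]
        _ = (j / M + 1) * M := by ring
      have hdiv : (j + 1) / M = j / M + 1 := by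
        rw [e2, Nat.mul_div_cancel _ hM]
      have hmod : (j + 1) % M = 0 := by rw [e2, Nat.mul_mod_left]
      have hq1 : j / M + 1 < M ^ d := by
        have h3 : (j / M + 1) * M < M ^ d * M := by
          rw [← e2]
          calc j + 1 < M ^ (d+1) := hj
          _ = M ^ d * M := by ring
        exact lt_of_mul_lt_mul_right h3 (Nat.zero_le M)
      have hhead : |((reflect M 0 (j / M + 1) : ℕ) : ℝ) -
          (reflect M (j % M) (j / M) : ℕ)| = 0 := by
        rw [hjm]
        unfold reflect
        rcases Nat.even_or_odd (j / M) with he | ho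
        · have h1 : j / M % 2 = 0 := Nat.even_iff.mp he
          have h2 : ¬((j / M + 1) % 2 = 0) := by omega
          simp only [h1, h2, if_true, if_false, reduceIte]
          simp
        · have h1 : ¬(j / M % 2 = 0) := by rw [Nat.odd_iff] at ho; omega
          have h2 : (j / M + 1) % 2 = 0 := by rw [Nat.odd_iff] at ho; omega
          simp only [h1, h2, if_true, if_false, reduceIte]
          simp
      rw [hmod, hdiv, hhead]
      have := ih (j / M) hq1
      linarith

noncomputable def ctr (M d : ℕ) (c : Fin d → ℕ) : EuclideanSpace ℝ (Fin d) :=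
  WithLp.toLp 2 (fun i => (2 * (c i : ℝ) + 1) / M - 1)

lemma norm_le_sqrt_of_coord {d : ℕ} (v : EuclideanSpace ℝ (Fin d)) (r : ℝ)
    (hr : 0 ≤ r) (h : ∀ i, |v i| ≤ r) : ‖v‖ ≤ Real.sqrt d * r := by
  rw [EuclideanSpace.norm_eq]
  have h1 : ∑ i : Fin d, ‖v i‖ ^ 2 ≤ ∑ _i : Fin d, r ^ 2 := by
    apply Finset.sum_le_sum
    intro i _
    have := h i
    rw [Real.norm_eq_abs]
    nlinarith [abs_nonneg (v i)]
  calc Real.sqrt (∑ i : Fin d, ‖v i‖ ^ 2) ≤ Real.sqrt (∑ _i : Fin d, r ^ 2) :=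
        Real.sqrt_le_sqrt h1
  _ = Real.sqrt (d * r ^ 2) := by rw [Finset.sum_const, Finset.card_univ, Fintype.card_fin,
        nsmul_eq_mul]
  _ = Real.sqrt d * r := by
        rw [Real.sqrt_mul (by positivity), Real.sqrt_sq hr]

lemma norm_le_sum_abs {d : ℕ} (v : EuclideanSpace ℝ (Fin d)) : ‖v‖ ≤ ∑ i, |v i| := by
  rw [EuclideanSpace.norm_eq]
  have h1 : ∑ i : Fin d, ‖v i‖ ^ 2 ≤ (∑ i : Fin d, |v i|) ^ 2 := by
    have := Finset.sum_sq_le_sq_sum_of_nonneg (s := Finset.univ)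
      (f := fun i : Fin d => |v i|) (fun i _ => abs_nonneg _)
    simpa [Real.norm_eq_abs] using this
  calc Real.sqrt (∑ i : Fin d, ‖v i‖ ^ 2) ≤ Real.sqrt ((∑ i : Fin d, |v i|) ^ 2) :=
        Real.sqrt_le_sqrt h1
  _ = ∑ i : Fin d, |v i| := Real.sqrt_sq (by positivity)

lemma ctr_step (M d : ℕ) (hM : 0 < M) (j : ℕ) (hj : j + 1 < M ^ d) :
    ‖ctr M d (snake M d j) - ctr M d (snake M d (j+1))‖ ≤ 2 / M := by
  have hMR : (0:ℝ) < M := by exact_mod_cast hM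
  have key := snake_step M hM d j hj
  calc ‖ctr M d (snake M d j) - ctr M d (snake M d (j+1))‖
      ≤ ∑ i, |(ctr M d (snake M d j) - ctr M d (snake M d (j+1))) i| := norm_le_sum_abs _
  _ = ∑ i : Fin d, (2 / M) * |((snake M d (j+1) i : ℝ)) - snake M d j i| := by
      apply Finset.sum_congr rfl
      intro i _
      have : (ctr M d (snake M d j) - ctr M d (snake M d (j+1))) i
          = (2 * ((snake M d j i : ℝ)) + 1) / M - 1 - ((2 * ((snake M d (j+1) i : ℝ)) + 1) / M - 1) := rfl
      rw [this]
      rw [show (2 * ((snake M d j i : ℝ)) + 1) / M - 1 - ((2 * ((snake M d (j+1) i : ℝ)) + 1) / M - 1)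
          = -((2 / M) * (((snake M d (j+1) i : ℝ)) - snake M d j i)) by field_simp; ring]
      rw [abs_neg, abs_mul, abs_of_nonneg (by positivity : (0:ℝ) ≤ 2 / M)]
  _ = (2 / M) * ∑ i : Fin d, |((snake M d (j+1) i : ℝ)) - snake M d j i| := by
        rw [Finset.mul_sum]
  _ ≤ (2 / M) * 1 := by
        apply mul_le_mul_of_nonneg_left key (by positivity)
  _ = 2 / M := mul_one _

lemma ctr_chain (M d : ℕ) (hM : 0 < M) :
    ∀ b a, a ≤ b → b < M ^ d →
      ‖ctr M d (snake M d a) - ctr M d (snake M d b)‖ ≤ ((b : ℝ) - a) * (2 / M) := by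
  intro b
  induction b with
  | zero =>
    intro a ha _
    interval_cases a
    simp
  | succ b ihb =>
    intro a ha hb
    rcases Nat.lt_or_ge a (b+1) with h | h
    · have h1 : a ≤ b := by omega
      have hb' : b < M ^ d := by omega
      have step := ctr_step M d hM b hb
      calc ‖ctr M d (snake M d a) - ctr M d (snake M d (b+1))‖
          ≤ ‖ctr M d (snake M d a) - ctr M d (snake M d b)‖ +
            ‖ctr M d (snake M d b) - ctr M d (snake M d (b+1))‖ := norm_sub_le_norm_sub_add_norm_sub _ _ _
      _ ≤ ((b : ℝ) - a) * (2 / M) + 2 / M := by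
            have := ihb a h1 hb'
            linarith
      _ = (((b+1 : ℕ) : ℝ) - a) * (2 / M) := by push_cast; ring
    · have : a = b + 1 := by omega
      subst this
      simp

noncomputable def cell (M d : ℕ) (x : EuclideanSpace ℝ (Fin d)) : Fin d → ℕ :=
  fun i => min (M - 1) ⌊(x i + 1) * M / 2⌋₊

lemma cell_lt (M d : ℕ) (hM : 0 < M) (x : EuclideanSpace ℝ (Fin d)) (i : Fin d) :
    cell M d x i < M := by
  have : cell M d x i ≤ M - 1 := min_le_left _ _
  omega

lemma coord_cell (M d : ℕ) (hM : 0 < M) (x : EuclideanSpace ℝ (Fin d)) (i : Fin d)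
    (hx : |x i| ≤ 1) : |x i - ((2 * ((cell M d x i : ℕ) : ℝ) + 1) / M - 1)| ≤ 1 / M := by
  have hMR : (0:ℝ) < M := by exact_mod_cast hM
  have hx1 : -1 ≤ x i := (abs_le.mp hx).1
  have hx2 : x i ≤ 1 := (abs_le.mp hx).2
  set y : ℝ := (x i + 1) * M / 2 with hy
  have hy0 : 0 ≤ y := by rw [hy]; nlinarith
  have hyM : y ≤ M := by rw [hy]; nlinarith
  have hq1 : ((cell M d x i : ℕ) : ℝ) ≤ y := by
    have h1 : cell M d x i ≤ ⌊y⌋₊ := min_le_right _ _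
    have h2 : (⌊y⌋₊ : ℝ) ≤ y := Nat.floor_le hy0
    calc ((cell M d x i : ℕ) : ℝ) ≤ (⌊y⌋₊ : ℝ) := by exact_mod_cast h1
    _ ≤ y := h2
  have hq2 : y ≤ ((cell M d x i : ℕ) : ℝ) + 1 := by
    have hcell : cell M d x i = min (M - 1) ⌊y⌋₊ := rfl
    rcases le_or_gt ⌊y⌋₊ (M - 1) with h | h
    · have hq : cell M d x i = ⌊y⌋₊ := by rw [hcell]; exact min_eq_right h
      rw [hq]
      have h5 := Nat.lt_floor_add_one y
      push_cast at h5 ⊢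
      linarith
    · have hq : cell M d x i = M - 1 := by rw [hcell]; exact min_eq_left (le_of_lt h)
      rw [hq, Nat.cast_sub (by omega : 1 ≤ M)]
      push_cast
      linarith
  have hxe : x i = 2 * y / M - 1 := by rw [hy]; field_simp; ring
  have hId : x i - ((2 * ((cell M d x i : ℕ) : ℝ) + 1) / M - 1)
      = (2 * y - (2 * ((cell M d x i : ℕ) : ℝ) + 1)) / M := by
    rw [hxe]; field_simp; ring
  rw [hId, abs_div, abs_of_pos hMR]
  have habs : |2 * y - (2 * ((cell M d x i : ℕ) : ℝ) + 1)| ≤ 1 := by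
    rw [abs_le]; constructor <;> linarith
  gcongr

lemma dist_ctr_cell (M d : ℕ) (hM : 0 < M) (x : EuclideanSpace ℝ (Fin d))
    (hx : ∀ i, |x i| ≤ 1) :
    ‖x - ctr M d (cell M d x)‖ ≤ Real.sqrt d * (1 / M) := by
  have hMR : (0:ℝ) < M := by exact_mod_cast hM
  apply norm_le_sqrt_of_coord _ _ (by positivity)
  intro i
  have : (x - ctr M d (cell M d x)) i = x i - ((2 * ((cell M d x i : ℕ) : ℝ) + 1) / M - 1) := rfl
  rw [this]
  exact coord_cell M d hM x i (hx i)

lemma dist_pair (M d : ℕ) (hM : 0 < M) (x y : EuclideanSpace ℝ (Fin d))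
    (hx : ∀ i, |x i| ≤ 1) (hy : ∀ i, |y i| ≤ 1)
    (hab : sidx M d (cell M d x) ≤ sidx M d (cell M d y)) :
    ‖x - y‖ ≤ 2 * Real.sqrt d * (1 / M) +
      (((sidx M d (cell M d y) : ℕ) : ℝ) - ((sidx M d (cell M d x) : ℕ) : ℝ)) * (2 / M) := by
  have hcx : ∀ i, cell M d x i < M := cell_lt M d hM x
  have hcy : ∀ i, cell M d y i < M := cell_lt M d hM y
  have hbx : sidx M d (cell M d x) < M ^ d := sidx_lt M d _ hcx
  have hby : sidx M d (cell M d y) < M ^ d := sidx_lt M d _ hcy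
  have hmid : ‖ctr M d (cell M d x) - ctr M d (cell M d y)‖
      ≤ (((sidx M d (cell M d y) : ℕ) : ℝ) - ((sidx M d (cell M d x) : ℕ) : ℝ)) * (2 / M) := by
    have e1 : snake M d (sidx M d (cell M d x)) = cell M d x := snake_sidx M d _ hcx
    have e2 : snake M d (sidx M d (cell M d y)) = cell M d y := snake_sidx M d _ hcy
    have h3 := ctr_chain M d hM (sidx M d (cell M d y)) (sidx M d (cell M d x)) hab hby
    rw [e1, e2] at h3
    exact h3
  have t1 : ‖x - ctr M d (cell M d x)‖ ≤ Real.sqrt d * (1 / M) := dist_ctr_cell M d hM x hx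
  have t2 : ‖ctr M d (cell M d y) - y‖ ≤ Real.sqrt d * (1 / M) := by
    rw [norm_sub_rev]; exact dist_ctr_cell M d hM y hy
  calc ‖x - y‖ = ‖(x - ctr M d (cell M d x)) + (ctr M d (cell M d x) - ctr M d (cell M d y))
        + (ctr M d (cell M d y) - y)‖ := by abel_nf
  _ ≤ ‖x - ctr M d (cell M d x)‖ + ‖ctr M d (cell M d x) - ctr M d (cell M d y)‖
        + ‖ctr M d (cell M d y) - y‖ := norm_add₃_le
  _ ≤ Real.sqrt d * (1 / M) +
        (((sidx M d (cell M d y) : ℕ) : ℝ) - ((sidx M d (cell M d x) : ℕ) : ℝ)) * (2 / M) +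
        Real.sqrt d * (1 / M) := add_le_add (add_le_add t1 hmid) t2
  _ = 2 * Real.sqrt d * (1 / M) +
      (((sidx M d (cell M d y) : ℕ) : ℝ) - ((sidx M d (cell M d x) : ℕ) : ℝ)) * (2 / M) := by ring



lemma sqrt_facts (k : ℕ) : 19 * Real.sqrt (k+3) ≤ 20 * Real.sqrt ((k:ℝ)+3+3)
    ∧ (Real.sqrt ((k:ℝ)+3) + 1 ≤ (3/2) * Real.sqrt ((k:ℝ)+3+3)) := by
  have h1 : Real.sqrt ((k:ℝ)+3) ≥ 0 := Real.sqrt_nonneg _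
  have h2 : Real.sqrt ((k:ℝ)+3+3) ≥ 0 := Real.sqrt_nonneg _
  have e1 : Real.sqrt ((k:ℝ)+3) ^ 2 = (k:ℝ)+3 := Real.sq_sqrt (by positivity)
  have e2 : Real.sqrt ((k:ℝ)+3+3) ^ 2 = (k:ℝ)+3+3 := Real.sq_sqrt (by positivity)
  constructor
  · nlinarith [sq_nonneg (19 * Real.sqrt ((k:ℝ)+3) - 20 * Real.sqrt ((k:ℝ)+3+3)),
      sq_nonneg (Real.sqrt ((k:ℝ)+3) + Real.sqrt ((k:ℝ)+3+3)), (Nat.cast_nonneg k : (0:ℝ) ≤ k)]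
  · nlinarith [sq_nonneg (Real.sqrt ((k:ℝ)+3) + 1 - (3/2) * Real.sqrt ((k:ℝ)+3+3)),
      sq_nonneg (Real.sqrt ((k:ℝ)+3) - 1), (Nat.cast_nonneg k : (0:ℝ) ≤ k),
      sq_nonneg (Real.sqrt ((k:ℝ)+3) - 2)]

-- Case M = 1 key: sd * A ≤ 2 sb B with A = sum_{i<d} T^i, B = sum_{i<d-1} T^i, T ≤ 2
lemma arith_case1 (k : ℕ) (T : ℝ) (hT1 : 1 ≤ T) (hT2 : T < 2) :
    Real.sqrt ((k:ℝ)+3) * (T ^ (k+3) - 1) ≤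
      2 * Real.sqrt ((k:ℝ)+3+3) * (T ^ (k+2) - 1) := by
  set sd := Real.sqrt ((k:ℝ)+3) with hsd
  set sb := Real.sqrt ((k:ℝ)+3+3) with hsb
  have h1 : 0 ≤ sd := Real.sqrt_nonneg _
  have h2 : 0 ≤ sb := Real.sqrt_nonneg _
  have e1 : sd ^ 2 = (k:ℝ)+3 := Real.sq_sqrt (by positivity)
  have e2 : sb ^ 2 = (k:ℝ)+3+3 := Real.sq_sqrt (by positivity)
  set A : ℝ := ∑ i ∈ range (k+3), T ^ i with hA
  set B : ℝ := ∑ i ∈ range (k+2), T ^ i with hB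
  have hgA : A * (T - 1) = T ^ (k+3) - 1 := geom_sum_mul T (k+3)
  have hgB : B * (T - 1) = T ^ (k+2) - 1 := geom_sum_mul T (k+2)
  have hABe : A = T * B + 1 := geom_sum_succ
  have hBge : ((k:ℝ)+2) ≤ B := by
    have h5 : ∀ i ∈ range (k+2), (1:ℝ) ≤ T ^ i := fun i _ => one_le_pow₀ hT1
    have h6 := Finset.card_nsmul_le_sum (range (k+2)) (fun i => T ^ i) 1 h5
    simp only [Finset.card_range, nsmul_eq_mul, mul_one] at h6
    push_cast at h6 ⊢
    linarith
  have hTB : T * B ≤ 2 * B := by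
    have hB0 : 0 ≤ B := by positivity
    nlinarith
  have key : sd * A ≤ 2 * sb * B := by
    have hsbd : sd ≤ 2 * (sb - sd) * ((k:ℝ)+2) := by
      nlinarith [sq_nonneg (sd - sb), sq_nonneg (sd + sb), (Nat.cast_nonneg k : (0:ℝ) ≤ k),
        mul_nonneg h1 h2, sq_nonneg (sd*(2*((k:ℝ)+3)-1) - 2*sb*((k:ℝ)+2))]
    calc sd * A = sd * (T * B) + sd := by rw [hABe]; ring
    _ ≤ sd * (2 * B) + sd := by nlinarith
    _ ≤ 2 * sb * B := by nlinarith [mul_nonneg h1 (by positivity : (0:ℝ) ≤ B)]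
  have hT1' : 0 ≤ T - 1 := by linarith
  calc sd * (T ^ (k+3) - 1) = sd * A * (T - 1) := by rw [← hgA]; ring
  _ ≤ 2 * sb * B * (T - 1) := by nlinarith
  _ = 2 * sb * (T ^ (k+2) - 1) := by rw [← hgB]; ring

lemma arith_case2 (k M : ℕ) (T : ℝ) (hM2 : 2 ≤ M) (hMT : (M:ℝ) ≤ T) (hTM : T < M + 1) :
    Real.sqrt ((k:ℝ)+3) * (T ^ (k+3) - 1) + ((M:ℝ) ^ (k+3) - 1) ≤
      2 * Real.sqrt ((k:ℝ)+3+3) * M * (T ^ (k+2) - 1) := by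
  set sd := Real.sqrt ((k:ℝ)+3) with hsd
  set sb := Real.sqrt ((k:ℝ)+3+3) with hsb
  have h1 : 0 ≤ sd := Real.sqrt_nonneg _
  have h2 : 0 ≤ sb := Real.sqrt_nonneg _
  have e1 : sd ^ 2 = (k:ℝ)+3 := Real.sq_sqrt (by positivity)
  have e2 : sb ^ 2 = (k:ℝ)+3+3 := Real.sq_sqrt (by positivity)
  have hM2R : (2:ℝ) ≤ M := by exact_mod_cast hM2
  have hMR : (0:ℝ) < M := by linarith
  have hT0 : (0:ℝ) < T := lt_of_lt_of_le hMR hMT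
  have hT32 : T ≤ (3/2) * M := by linarith
  -- S and S'
  set S : ℝ := ∑ i ∈ range (k+3), T ^ i * (M:ℝ) ^ (k+3-1-i) with hS
  set S' : ℝ := ∑ i ∈ range (k+2), T ^ i * (M:ℝ) ^ (k+2-1-i) with hS'
  have hgS : S * (T - M) = T ^ (k+3) - (M:ℝ) ^ (k+3) := geom_sum₂_mul T (M:ℝ) (k+3)
  have hgS' : S' * (T - M) = T ^ (k+2) - (M:ℝ) ^ (k+2) := geom_sum₂_mul T (M:ℝ) (k+2)
  -- S = M * S' + T^(k+2)
  have hsplit : S = (M:ℝ) * S' + T ^ (k+2) := by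
    rw [hS, hS', Finset.sum_range_succ, Finset.mul_sum]
    congr 1
    · apply Finset.sum_congr rfl
      intro i hi
      have hi' : i < k + 2 := Finset.mem_range.mp hi
      have : k + 3 - 1 - i = (k + 2 - 1 - i) + 1 := by omega
      rw [this]
      ring
    · have : k + 3 - 1 - (k+2) = 0 := by omega
      rw [this]
      ring
  -- lower bound on M * S'
  have hS'low : (10/9) * T ^ (k+2) ≤ (M:ℝ) * S' := by
    have peel : S' = (∑ i ∈ range k, T ^ i * (M:ℝ) ^ (k+2-1-i)) + T ^ k * M + T ^ (k+1) := by
      rw [hS', Finset.sum_range_succ, Finset.sum_range_succ]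
      have e3 : k + 2 - 1 - (k+1) = 0 := by omega
      have e4 : k + 2 - 1 - k = 1 := by omega
      rw [e3, e4]
      ring
    have hrest : (0:ℝ) ≤ ∑ i ∈ range k, T ^ i * (M:ℝ) ^ (k+2-1-i) := by
      apply Finset.sum_nonneg
      intro i _
      positivity
    have hk1 : (2/3) * T ^ (k+2) ≤ T ^ (k+1) * M := by
      have : T ^ (k+2) = T ^ (k+1) * T := by ring
      rw [this]
      have hTk1 : (0:ℝ) ≤ T ^ (k+1) := by positivity
      nlinarith
    have hk2 : (4/9) * T ^ (k+2) ≤ T ^ k * M ^ 2 := by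
      have hTk : (0:ℝ) ≤ T ^ k := by positivity
      have h23 : (2/3) * T ≤ (M:ℝ) := by linarith
      have hTT : T ^ (k+2) = T ^ k * T * T := by ring
      nlinarith [mul_nonneg hTk hT0.le, sq_nonneg ((M:ℝ) - (2/3)*T), mul_nonneg (mul_nonneg hTk hT0.le) hT0.le]
    calc (10/9) * T ^ (k+2) = (2/3) * T ^ (k+2) + (4/9) * T ^ (k+2) := by ring
    _ ≤ T ^ (k+1) * M + T ^ k * M ^ 2 := by linarith
    _ ≤ (M:ℝ) * S' := by rw [peel]; nlinarith [hrest]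
  -- step 1 : (2 sb - sd) * M * S' ≥ sd * T^(k+2), then multiplied out
  have hsb19 : 19 * sd ≤ 20 * sb := (sqrt_facts k).1
  have step1core : sd * S ≤ 2 * sb * ((M:ℝ) * S') := by
    have hq : sd * T ^ (k+2) ≤ (2 * sb - sd) * ((M:ℝ) * S') := by
      have hMS' : (0:ℝ) ≤ (M:ℝ) * S' := le_trans (by positivity) hS'low
      have hsdb : sd ≤ sb := Real.sqrt_le_sqrt (by linarith)
      have h9 : (2 * sb - sd) * ((10/9) * T ^ (k+2)) ≤ (2 * sb - sd) * ((M:ℝ) * S') := by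
        apply mul_le_mul_of_nonneg_left hS'low
        linarith
      have h10 : sd * T ^ (k+2) ≤ (2 * sb - sd) * ((10/9) * T ^ (k+2)) := by
        have hTk2 : (0:ℝ) ≤ T ^ (k+2) := by positivity
        nlinarith
      linarith
    rw [hsplit]
    have expand : sd * ((M:ℝ) * S' + T ^ (k+2)) = sd * ((M:ℝ) * S') + sd * T ^ (k+2) := by ring
    rw [expand]
    ring_nf at hq ⊢
    linarith [hq]
  have step1 : sd * (T ^ (k+3) - (M:ℝ) ^ (k+3)) ≤
      2 * sb * (M:ℝ) * (T ^ (k+2) - (M:ℝ) ^ (k+2)) := by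
    have hTMnn : (0:ℝ) ≤ T - M := by linarith
    have := mul_le_mul_of_nonneg_right step1core hTMnn
    calc sd * (T ^ (k+3) - (M:ℝ) ^ (k+3)) = sd * (S * (T - M)) := by rw [hgS]
    _ = sd * S * (T - M) := by ring
    _ ≤ 2 * sb * ((M:ℝ) * S') * (T - M) := this
    _ = 2 * sb * (M:ℝ) * (S' * (T - M)) := by ring
    _ = 2 * sb * (M:ℝ) * (T ^ (k+2) - (M:ℝ) ^ (k+2)) := by rw [hgS']
  -- step 2
  have hMpow : (4:ℝ) ≤ (M:ℝ) ^ (k+2) := by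
    calc (4:ℝ) = 2 ^ 2 := by norm_num
    _ ≤ (M:ℝ) ^ 2 := by nlinarith
    _ ≤ (M:ℝ) ^ (k+2) := pow_le_pow_right₀ (by linarith) (by omega)
  have hsb32 : sd + 1 ≤ (3/2) * sb := (sqrt_facts k).2
  have step2 : sd * (M:ℝ) ^ (k+3) + (M:ℝ) ^ (k+3) + 2 * sb * (M:ℝ) ≤
      2 * sb * (M:ℝ) ^ (k+3) + 1 + sd := by
    -- (2 sb - sd - 1) M^(k+3) ≥ 2 sb M, i.e. (2 sb - sd - 1) M^(k+2) ≥ 2 sb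
    have hcoef : (2 * sb) / 4 ≤ 2 * sb - sd - 1 := by nlinarith
    have hsb0 : 0 < sb := by nlinarith
    have hkey : 2 * sb * (M:ℝ) ≤ (2 * sb - sd - 1) * (M:ℝ) ^ (k+3) := by
      have hMk3 : (M:ℝ) ^ (k+3) = (M:ℝ) ^ (k+2) * M := by ring
      have h11 : 2 * sb ≤ (2 * sb - sd - 1) * (M:ℝ) ^ (k+2) := by
        calc 2 * sb = ((2 * sb) / 4) * 4 := by ring
        _ ≤ (2 * sb - sd - 1) * (M:ℝ) ^ (k+2) := by
            apply mul_le_mul hcoef hMpow (by norm_num) (by nlinarith)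
      calc 2 * sb * (M:ℝ) = (2 * sb) * (M:ℝ) := by ring
      _ ≤ ((2 * sb - sd - 1) * (M:ℝ) ^ (k+2)) * (M:ℝ) := by
          apply mul_le_mul_of_nonneg_right h11 hMR.le
      _ = (2 * sb - sd - 1) * (M:ℝ) ^ (k+3) := by ring
    ring_nf at hkey ⊢
    linarith [hkey, h1]
  -- combine
  have h13 : (0:ℝ) ≤ sd * (M:ℝ) ^ (k+3) := mul_nonneg h1 (pow_nonneg hMR.le _)
  have h14 : sd * 1 ≤ sd * (M:ℝ) ^ (k+3) :=
    mul_le_mul_of_nonneg_left (one_le_pow₀ (by linarith)) h1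
  ring_nf at step1 step2 h13 h14 ⊢
  linarith [step1, step2, h13, h14]


lemma coord_le_norm {d : ℕ} (x : EuclideanSpace ℝ (Fin d)) (j : Fin d) : |x j| ≤ ‖x‖ := by
  rw [EuclideanSpace.norm_eq]
  have h1 : |x j| ^ 2 ≤ ∑ i, ‖x i‖ ^ 2 := by
    have := Finset.single_le_sum (f := fun i : Fin d => ‖x i‖ ^ 2)
      (fun i _ => by positivity) (Finset.mem_univ j)
    simpa [Real.norm_eq_abs] using this
  calc |x j| = Real.sqrt (|x j| ^ 2) := (Real.sqrt_sq (abs_nonneg _)).symm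
  _ ≤ Real.sqrt (∑ i, ‖x i‖ ^ 2) := Real.sqrt_le_sqrt h1

lemma telescope : ∀ (n : ℕ) (h : Fin (n+1) → ℝ),
    ∑ i : Fin n, (h i.succ - h i.castSucc) = h (Fin.last n) - h 0 := by
  intro n
  induction n with
  | zero => intro h; simp
  | succ n ih =>
    intro h
    rw [Fin.sum_univ_castSucc]
    have e : ∀ i : Fin n, h (i.castSucc).succ - h (i.castSucc).castSucc
        = ((h ∘ Fin.castSucc) i.succ - (h ∘ Fin.castSucc) i.castSucc) := by
      intro i
      simp only [Function.comp_apply, Fin.succ_castSucc]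
    rw [Finset.sum_congr rfl (fun i _ => e i), ih (h ∘ Fin.castSucc)]
    simp only [Function.comp_apply, Fin.succ_last, Fin.castSucc_zero]
    ring

end BO

set_option maxHeartbeats 1000000 in
/-- Benedetto–Oktay: existence of a permutation with small frame
variation for a unit-norm family in `ℝ^d`, `d ≥ 3`. -/
theorem stmt2 {d N : ℕ} (hd : 3 ≤ d) (hN : 0 < N)
    (e : Fin N → EuclideanSpace ℝ (Fin d))
    (hunit : ∀ i, ‖e i‖ = 1) :
    ∃ p : Equiv.Perm (Fin N),
      frameVar (fun i => e (p i)) ≤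
        4 * Real.sqrt ((d : ℝ) + 3) * (N : ℝ) ^ (1 - 1 / (d : ℝ)) -
          4 * Real.sqrt ((d : ℝ) + 3) := by

  classical
  obtain ⟨n, rfl⟩ : ∃ n, N = n + 1 := ⟨N - 1, (Nat.succ_pred_eq_of_pos hN).symm⟩
  obtain ⟨k, rfl⟩ : ∃ k, d = k + 3 := ⟨d - 3, by omega⟩
  have hd3 : ((k + 3 : ℕ) : ℝ) = (k : ℝ) + 3 := by push_cast; ring
  set Nr : ℝ := ((n + 1 : ℕ) : ℝ) with hNrdef
  have hNr1 : (1 : ℝ) ≤ Nr := by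
    rw [hNrdef]; exact_mod_cast Nat.one_le_iff_ne_zero.mpr (Nat.succ_ne_zero n)
  have hNr0 : (0 : ℝ) ≤ Nr := by linarith
  set T : ℝ := Nr ^ (((k : ℝ) + 3)⁻¹) with hTdef
  have hk3pos : (0 : ℝ) < (k : ℝ) + 3 := by positivity
  have hT1 : 1 ≤ T := by
    rw [hTdef]
    calc (1 : ℝ) = (1 : ℝ) ^ (((k : ℝ) + 3)⁻¹) := (Real.one_rpow _).symm
    _ ≤ Nr ^ (((k : ℝ) + 3)⁻¹) := Real.rpow_le_rpow (by norm_num) hNr1 (by positivity)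
  have hT0 : (0 : ℝ) < T := by linarith
  have hTd : T ^ (k + 3) = Nr := by
    rw [hTdef, ← Real.rpow_natCast (Nr ^ (((k : ℝ) + 3)⁻¹)) (k + 3),
      ← Real.rpow_mul hNr0]
    rw [show (((k : ℝ) + 3)⁻¹ * ((k + 3 : ℕ) : ℝ)) = 1 by rw [hd3]; field_simp]
    exact Real.rpow_one Nr
  set M : ℕ := ⌊T⌋₊ with hMdef
  have hM1 : 0 < M := by rw [hMdef]; exact Nat.floor_pos.mpr hT1
  have hMT : (M : ℝ) ≤ T := Nat.floor_le hT0.le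
  have hTM : T < (M : ℝ) + 1 := by exact_mod_cast Nat.lt_floor_add_one T
  have hMR : (0 : ℝ) < M := by exact_mod_cast hM1
  -- the sorting permutation
  set K : Fin (n + 1) → ℕ := fun i => BO.sidx M (k + 3) (BO.cell M (k + 3) (e i)) with hKdef
  refine ⟨Tuple.sort K, ?_⟩
  set p : Equiv.Perm (Fin (n + 1)) := Tuple.sort K with hpdef
  have hmono : Monotone (K ∘ p) := Tuple.monotone_sort K
  have hcube : ∀ (i : Fin (n + 1)) (j : Fin (k + 3)), |e i j| ≤ 1 := by
    intro i j
    calc |e i j| ≤ ‖e i‖ := BO.coord_le_norm (e i) j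
    _ = 1 := hunit i
  have hKlt : ∀ i, K i < M ^ (k + 3) := fun i =>
    BO.sidx_lt M (k + 3) _ (BO.cell_lt M (k + 3) hM1 (e i))
  -- term-wise bound
  have hterm : ∀ i : Fin n, ‖e (p i.castSucc) - e (p i.succ)‖ ≤
      2 * Real.sqrt ((k + 3 : ℕ)) * (1 / M) +
      (((K (p i.succ) : ℕ) : ℝ) - ((K (p i.castSucc) : ℕ) : ℝ)) * (2 / M) := by
    intro i
    have hab : K (p i.castSucc) ≤ K (p i.succ) := hmono (Fin.castSucc_le_succ i)
    exact BO.dist_pair M (k + 3) hM1 (e (p i.castSucc)) (e (p i.succ))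
      (hcube _) (hcube _) hab
  have hfv : frameVar (fun i => e (p i)) =
      ∑ i : Fin n, ‖e (p i.castSucc) - e (p i.succ)‖ := rfl
  have htel : ∑ i : Fin n, ((((K (p i.succ)) : ℕ) : ℝ) - (((K (p i.castSucc)) : ℕ) : ℝ))
      = ((K (p (Fin.last n)) : ℕ) : ℝ) - ((K (p 0) : ℕ) : ℝ) :=
    BO.telescope n (fun i => ((K (p i) : ℕ) : ℝ))
  have hlast : ((K (p (Fin.last n)) : ℕ) : ℝ) ≤ (M : ℝ) ^ (k + 3) - 1 := by
    have h := hKlt (p (Fin.last n))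
    have h2 : ((K (p (Fin.last n)) : ℕ) : ℝ) + 1 ≤ ((M ^ (k + 3) : ℕ) : ℝ) := by
      exact_mod_cast h
    push_cast at h2
    linarith
  have h0K : (0 : ℝ) ≤ ((K (p 0) : ℕ) : ℝ) := Nat.cast_nonneg _
  -- the key scalar inequality
  have hnat : ((n : ℕ) : ℝ) = T ^ (k + 3) - 1 := by
    rw [hTd, hNrdef]; push_cast; ring
  have keyF : Real.sqrt ((k : ℝ) + 3) * (T ^ (k + 3) - 1) + ((M : ℝ) ^ (k + 3) - 1) ≤
      2 * Real.sqrt ((k : ℝ) + 3 + 3) * M * (T ^ (k + 2) - 1) := by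
    rcases Nat.lt_or_ge M 2 with h2 | h2
    · have hMeq : M = 1 := by omega
      have hT2 : T < 2 := by rw [hMeq] at hTM; push_cast at hTM; linarith
      have := BO.arith_case1 k T hT1 hT2
      rw [hMeq]
      push_cast
      rw [one_pow]
      linarith
    · exact BO.arith_case2 k M T h2 hMT hTM
  -- put it together
  have hsq : Real.sqrt ((k + 3 : ℕ)) = Real.sqrt ((k : ℝ) + 3) := by rw [hd3]
  have main : ∑ i : Fin n, ‖e (p i.castSucc) - e (p i.succ)‖ ≤
      4 * Real.sqrt ((k : ℝ) + 3 + 3) * (T ^ (k + 2) - 1) := by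
    calc ∑ i : Fin n, ‖e (p i.castSucc) - e (p i.succ)‖
        ≤ ∑ i : Fin n, (2 * Real.sqrt ((k + 3 : ℕ)) * (1 / M) +
            (((K (p i.succ) : ℕ) : ℝ) - ((K (p i.castSucc) : ℕ) : ℝ)) * (2 / M)) :=
          Finset.sum_le_sum (fun i _ => hterm i)
    _ = (n : ℝ) * (2 * Real.sqrt ((k + 3 : ℕ)) * (1 / M)) +
          (∑ i : Fin n, ((((K (p i.succ)) : ℕ) : ℝ) - (((K (p i.castSucc)) : ℕ) : ℝ))) * (2 / M) := by
          rw [Finset.sum_add_distrib, Finset.sum_const, Finset.card_univ, Fintype.card_fin,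
            nsmul_eq_mul, ← Finset.sum_mul]
    _ = (n : ℝ) * (2 * Real.sqrt ((k + 3 : ℕ)) * (1 / M)) +
          (((K (p (Fin.last n)) : ℕ) : ℝ) - ((K (p 0) : ℕ) : ℝ)) * (2 / M) := by rw [htel]
    _ ≤ (n : ℝ) * (2 * Real.sqrt ((k + 3 : ℕ)) * (1 / M)) +
          ((M : ℝ) ^ (k + 3) - 1) * (2 / M) := by
          have hd2 : (0 : ℝ) ≤ 2 / M := by positivity
          have : ((K (p (Fin.last n)) : ℕ) : ℝ) - ((K (p 0) : ℕ) : ℝ) ≤ (M : ℝ) ^ (k + 3) - 1 := by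
            linarith
          nlinarith [this, hd2]
    _ ≤ 4 * Real.sqrt ((k : ℝ) + 3 + 3) * (T ^ (k + 2) - 1) := by
          rw [hsq, hnat]
          have hscaled := mul_le_mul_of_nonneg_left keyF (by positivity : (0 : ℝ) ≤ 2 / M)
          have hMne : (M : ℝ) ≠ 0 := ne_of_gt hMR
          calc (T ^ (k + 3) - 1) * (2 * Real.sqrt ((k : ℝ) + 3) * (1 / M)) +
                ((M : ℝ) ^ (k + 3) - 1) * (2 / M)
              = (2 / M) * (Real.sqrt ((k : ℝ) + 3) * (T ^ (k + 3) - 1) +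
                  ((M : ℝ) ^ (k + 3) - 1)) := by field_simp
          _ ≤ (2 / M) * (2 * Real.sqrt ((k : ℝ) + 3 + 3) * M * (T ^ (k + 2) - 1)) := hscaled
          _ = 4 * Real.sqrt ((k : ℝ) + 3 + 3) * (T ^ (k + 2) - 1) := by field_simp; ring
  -- translate RHS
  have hexp : ((n + 1 : ℕ) : ℝ) ^ (1 - 1 / (((k + 3 : ℕ) : ℕ) : ℝ)) = T ^ (k + 2) := by
    rw [hTdef]
    rw [show (1 - 1 / (((k + 3 : ℕ) : ℕ) : ℝ)) = ((k : ℝ) + 3)⁻¹ * ((k + 2 : ℕ) : ℝ) by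
      rw [hd3]; push_cast; field_simp; ring]
    rw [Real.rpow_mul hNr0, Real.rpow_natCast]
  have hsq2 : Real.sqrt (((k + 3 : ℕ) : ℝ) + 3) = Real.sqrt ((k : ℝ) + 3 + 3) := by
    rw [hd3]
  rw [hfv, hsq2, hexp]
  linarith [main]
end

section
/- Let σ: ℝ → ℝ be an L-Lipschitz function with σ(0) = 0, applied componentwise to vectors. Let W_1, ..., W_n and Q_1, ..., Q_n be matrices with W_l, Q_l ∈ ℝ^{m_l × m_{l−1}}, and suppose ‖W_j − Q_j‖ ≤ ε_j for every j ∈ {1, ..., n}, where ‖·‖ is the matrix 2-norm. Define f(x) = W_n σ(W_{n−1} σ(··· σ(W_1 x) ···)) and f_Q(x) = Q_n σ(Q_{n−1} σ(··· σ(Q_1 x) ···)) (no activation after the last layer, no biases). Then for every X ∈ ℝ^{m_0}, ‖f(X) − f_Q(X)‖ ≤ L^{n−1} ‖X‖ · Σ_{j=1}^{n} [ ε_j · ∏_{i=j+1}^{n} ‖W_i‖ · ∏_{l=1}^{j−1} (ε_l + ‖W_l‖) ]. -/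
open scoped RealInnerProductSpace BigOperators

section Aux

lemma aux_opNorm_nonneg {m n : ℕ} (A : Matrix (Fin m) (Fin n) ℝ) : 0 ≤ opNorm A := norm_nonneg _

lemma aux_apply_le_opNorm {m n : ℕ} (A : Matrix (Fin m) (Fin n) ℝ)
    (v : EuclideanSpace ℝ (Fin n)) :
    ‖Matrix.toEuclideanLin A v‖ ≤ opNorm A * ‖v‖ := by
  have := (LinearMap.toContinuousLinearMap (Matrix.toEuclideanLin A)).le_opNorm v
  simpa [opNorm] using this

lemma aux_opNorm_sub_le {m n : ℕ} (A B : Matrix (Fin m) (Fin n) ℝ) :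
    opNorm B ≤ opNorm A + opNorm (A - B) := by
  unfold opNorm
  have h : (LinearMap.toContinuousLinearMap (Matrix.toEuclideanLin B)) =
      (LinearMap.toContinuousLinearMap (Matrix.toEuclideanLin A)) -
      (LinearMap.toContinuousLinearMap (Matrix.toEuclideanLin (A - B))) := by
    simp [map_sub]
  rw [h]
  exact norm_sub_le _ _

lemma aux_norm_le {d : ℕ} (a b : EuclideanSpace ℝ (Fin d)) (h : ∀ i, |a i| ≤ |b i|) :
    ‖a‖ ≤ ‖b‖ := by
  rw [EuclideanSpace.norm_eq, EuclideanSpace.norm_eq]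
  apply Real.sqrt_le_sqrt
  apply Finset.sum_le_sum
  intro i _
  simp only [Real.norm_eq_abs]
  exact pow_le_pow_left₀ (abs_nonneg _) (h i) 2

lemma aux_cw_lip {L : ℝ} {σ : ℝ → ℝ} (hL : 0 ≤ L)
    (hσ : ∀ a b : ℝ, |σ a - σ b| ≤ L * |a - b|) {d : ℕ}
    (u v : EuclideanSpace ℝ (Fin d)) :
    ‖cwMap σ u - cwMap σ v‖ ≤ L * ‖u - v‖ := by
  have h0 : L * ‖u - v‖ = ‖L • (u - v)‖ := by
    rw [norm_smul, Real.norm_eq_abs, abs_of_nonneg hL]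
  rw [h0]
  apply aux_norm_le
  intro i
  have h1 : (cwMap σ u - cwMap σ v) i = σ (u i) - σ (v i) := by
    simp [cwMap, PiLp.sub_apply]
  have h2 : (L • (u - v)) i = L * (u i - v i) := by
    simp [PiLp.smul_apply, PiLp.sub_apply, smul_eq_mul]
  rw [h1, h2, abs_mul, abs_of_nonneg hL]
  exact hσ (u i) (v i)

lemma aux_cw_norm {L : ℝ} {σ : ℝ → ℝ} (hL : 0 ≤ L)
    (hσ : ∀ a b : ℝ, |σ a - σ b| ≤ L * |a - b|) (hσ0 : σ 0 = 0) {d : ℕ}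
    (u : EuclideanSpace ℝ (Fin d)) :
    ‖cwMap σ u‖ ≤ L * ‖u‖ := by
  have h0 : cwMap σ (0 : EuclideanSpace ℝ (Fin d)) = 0 := by
    ext i; simp [cwMap, hσ0]
  have := aux_cw_lip hL hσ u (0 : EuclideanSpace ℝ (Fin d))
  rw [h0] at this
  simpa using this

end Aux

noncomputable def auxB (ε opW : ℕ → ℝ) (i : ℕ) : ℝ :=
  ∑ j ∈ Finset.range i, ε j * (∏ k ∈ Finset.Ico (j + 1) i, opW k) *
    (∏ l ∈ Finset.range j, (ε l + opW l))

lemma auxB_succ (ε opW : ℕ → ℝ) (i : ℕ) :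
    auxB ε opW (i + 2) = opW (i + 1) * auxB ε opW (i + 1) +
      ε (i + 1) * ∏ l ∈ Finset.range (i + 1), (ε l + opW l) := by
  unfold auxB
  rw [Finset.sum_range_succ, Finset.mul_sum]
  congr 1
  · apply Finset.sum_congr rfl
    intro j hj
    have hj' : j + 1 ≤ i + 1 := by
      simp only [Finset.mem_range] at hj; omega
    rw [Finset.prod_Ico_succ_top hj']
    ring
  · rw [Finset.Ico_self, Finset.prod_empty]
    ring

lemma auxB_one (ε opW : ℕ → ℝ) : auxB ε opW 1 = ε 0 := by
  simp [auxB]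

/-- perturbation bound for feed-forward networks: here the
network has `n+1` layers, indexed `0, …, n`, so the paper's `L^{n-1}` is `L^n`
and the paper's sum `∑_{j=1}^{n}` is `∑_{j=0}^{n}`. -/
theorem stmt6 (L : ℝ) (σ : ℝ → ℝ)
    (hσ : ∀ a b : ℝ, |σ a - σ b| ≤ L * |a - b|) (hσ0 : σ 0 = 0)
    (n : ℕ) (m : ℕ → ℕ)
    (W Q : (i : ℕ) → Matrix (Fin (m (i + 1))) (Fin (m i)) ℝ)
    (ε : ℕ → ℝ) (hQ : ∀ j ≤ n, opNorm (W j - Q j) ≤ ε j)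
    (X : EuclideanSpace ℝ (Fin (m 0))) :
    ‖net σ m W (n + 1) X - net σ m Q (n + 1) X‖ ≤
      L ^ n * ‖X‖ * ∑ j ∈ Finset.range (n + 1),
        ε j * (∏ i ∈ Finset.Ico (j + 1) (n + 1), opNorm (W i)) *
          (∏ l ∈ Finset.range j, (ε l + opNorm (W l))) := by

  have hL : 0 ≤ L := by
    have h := hσ 1 0
    have h0 : (0:ℝ) ≤ |σ 1 - σ 0| := abs_nonneg _
    have h1 : |(1:ℝ) - 0| = 1 := by norm_num
    rw [h1, mul_one] at h
    linarith
  have hεnn : ∀ j ≤ n, 0 ≤ ε j := fun j hj =>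
    le_trans (aux_opNorm_nonneg _) (hQ j hj)
  have hεW : ∀ j ≤ n, 0 ≤ ε j + opNorm (W j) := fun j hj =>
    add_nonneg (hεnn j hj) (aux_opNorm_nonneg _)
  have hprodnn : ∀ i, i ≤ n + 1 →
      0 ≤ ∏ l ∈ Finset.range i, (ε l + opNorm (W l)) := by
    intro i hi
    apply Finset.prod_nonneg
    intro l hl
    simp only [Finset.mem_range] at hl
    exact hεW l (by omega)
  -- norm bound for quantized layer outputs
  have hz : ∀ i, i ≤ n → ‖layerSeq σ m Q X i‖ ≤
      L ^ i * (∏ l ∈ Finset.range i, (ε l + opNorm (W l))) * ‖X‖ := by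
    intro i
    induction i with
    | zero => intro _; simp [layerSeq]
    | succ i ih =>
      intro hi
      have hi' : i ≤ n := by omega
      have ih' := ih hi'
      have hQle : opNorm (Q i) ≤ ε i + opNorm (W i) := by
        have h1 := aux_opNorm_sub_le (W i) (Q i)
        have h2 := hQ i hi'
        linarith
      calc ‖layerSeq σ m Q X (i + 1)‖
          ≤ L * ‖Matrix.toEuclideanLin (Q i) (layerSeq σ m Q X i)‖ :=
            aux_cw_norm hL hσ hσ0 _
        _ ≤ L * (opNorm (Q i) * ‖layerSeq σ m Q X i‖) := by
            apply mul_le_mul_of_nonneg_left (aux_apply_le_opNorm _ _) hL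
        _ ≤ L * ((ε i + opNorm (W i)) *
              (L ^ i * (∏ l ∈ Finset.range i, (ε l + opNorm (W l))) * ‖X‖)) := by
            apply mul_le_mul_of_nonneg_left _ hL
            exact mul_le_mul hQle ih' (norm_nonneg _) (hεW i hi')
        _ = L ^ (i + 1) * (∏ l ∈ Finset.range (i + 1), (ε l + opNorm (W l))) * ‖X‖ := by
            rw [Finset.prod_range_succ]; ring
  -- main induction
  have hE : ∀ i, i ≤ n →
      ‖Matrix.toEuclideanLin (W i) (layerSeq σ m W X i) -
        Matrix.toEuclideanLin (Q i) (layerSeq σ m Q X i)‖ ≤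
      L ^ i * ‖X‖ * auxB ε (fun k => opNorm (W k)) (i + 1) := by
    intro i
    induction i with
    | zero =>
      intro _
      have hsub : Matrix.toEuclideanLin (W 0) (layerSeq σ m W X 0) -
          Matrix.toEuclideanLin (Q 0) (layerSeq σ m Q X 0) =
          Matrix.toEuclideanLin (W 0 - Q 0) X := by
        simp [layerSeq, map_sub, LinearMap.sub_apply]
      rw [hsub, auxB_one]
      calc ‖Matrix.toEuclideanLin (W 0 - Q 0) X‖ ≤ opNorm (W 0 - Q 0) * ‖X‖ :=
            aux_apply_le_opNorm _ _
        _ ≤ ε 0 * ‖X‖ := mul_le_mul_of_nonneg_right (hQ 0 (by omega)) (norm_nonneg _)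
        _ = L ^ 0 * ‖X‖ * ε 0 := by ring
    | succ i ih =>
      intro hi
      have hi' : i ≤ n := by omega
      have ihE := ih hi'
      have hsplit : Matrix.toEuclideanLin (W (i + 1)) (layerSeq σ m W X (i + 1)) -
          Matrix.toEuclideanLin (Q (i + 1)) (layerSeq σ m Q X (i + 1)) =
          Matrix.toEuclideanLin (W (i + 1))
            (layerSeq σ m W X (i + 1) - layerSeq σ m Q X (i + 1)) +
          Matrix.toEuclideanLin (W (i + 1) - Q (i + 1)) (layerSeq σ m Q X (i + 1)) := by
        simp only [map_sub, LinearMap.sub_apply]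
        abel
      have hdiff : ‖layerSeq σ m W X (i + 1) - layerSeq σ m Q X (i + 1)‖ ≤
          L * ‖Matrix.toEuclideanLin (W i) (layerSeq σ m W X i) -
            Matrix.toEuclideanLin (Q i) (layerSeq σ m Q X i)‖ :=
        aux_cw_lip hL hσ _ _
      have hzb := hz (i + 1) hi
      have hεnn1 : 0 ≤ ε (i + 1) := hεnn (i + 1) hi
      have hterm1 : ‖Matrix.toEuclideanLin (W (i + 1))
            (layerSeq σ m W X (i + 1) - layerSeq σ m Q X (i + 1))‖ ≤
          opNorm (W (i + 1)) * (L * (L ^ i * ‖X‖ * auxB ε (fun k => opNorm (W k)) (i + 1))) := by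
        calc ‖Matrix.toEuclideanLin (W (i + 1))
              (layerSeq σ m W X (i + 1) - layerSeq σ m Q X (i + 1))‖
            ≤ opNorm (W (i + 1)) *
              ‖layerSeq σ m W X (i + 1) - layerSeq σ m Q X (i + 1)‖ :=
              aux_apply_le_opNorm _ _
          _ ≤ opNorm (W (i + 1)) * (L * (L ^ i * ‖X‖ * auxB ε (fun k => opNorm (W k)) (i + 1))) := by
              apply mul_le_mul_of_nonneg_left _ (aux_opNorm_nonneg _)
              exact le_trans hdiff (mul_le_mul_of_nonneg_left ihE hL)
      have hterm2 : ‖Matrix.toEuclideanLin (W (i + 1) - Q (i + 1)) (layerSeq σ m Q X (i + 1))‖ ≤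
          ε (i + 1) * (L ^ (i + 1) *
            (∏ l ∈ Finset.range (i + 1), (ε l + opNorm (W l))) * ‖X‖) := by
        calc ‖Matrix.toEuclideanLin (W (i + 1) - Q (i + 1)) (layerSeq σ m Q X (i + 1))‖
            ≤ opNorm (W (i + 1) - Q (i + 1)) * ‖layerSeq σ m Q X (i + 1)‖ :=
              aux_apply_le_opNorm _ _
          _ ≤ ε (i + 1) * (L ^ (i + 1) *
              (∏ l ∈ Finset.range (i + 1), (ε l + opNorm (W l))) * ‖X‖) :=
              mul_le_mul (hQ (i + 1) hi) hzb (norm_nonneg _) hεnn1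
      calc ‖Matrix.toEuclideanLin (W (i + 1)) (layerSeq σ m W X (i + 1)) -
            Matrix.toEuclideanLin (Q (i + 1)) (layerSeq σ m Q X (i + 1))‖
          ≤ ‖Matrix.toEuclideanLin (W (i + 1))
              (layerSeq σ m W X (i + 1) - layerSeq σ m Q X (i + 1))‖ +
            ‖Matrix.toEuclideanLin (W (i + 1) - Q (i + 1)) (layerSeq σ m Q X (i + 1))‖ := by
            rw [hsplit]; exact norm_add_le _ _
        _ ≤ opNorm (W (i + 1)) * (L * (L ^ i * ‖X‖ * auxB ε (fun k => opNorm (W k)) (i + 1))) +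
            ε (i + 1) * (L ^ (i + 1) *
              (∏ l ∈ Finset.range (i + 1), (ε l + opNorm (W l))) * ‖X‖) :=
            add_le_add hterm1 hterm2
        _ = L ^ (i + 1) * ‖X‖ * auxB ε (fun k => opNorm (W k)) (i + 2) := by
            rw [auxB_succ]; ring
  have h := hE n le_rfl
  simpa [auxB, net] using h
end

section
/- Let f(x) = W_n σ(W_{n−1} σ(··· σ(W_1 x) ···)) be a feed-forward neural network with n layers and weight matrices W_l ∈ ℝ^{m_l × m_{l−1}} where m_l ≥ 3 for all l, and with activation σ: ℝ → ℝ that is L-Lipschitz with σ(0) = 0, applied componentwise (no activation after the last layer, no biases). Let σ_i = ‖W_i‖. Suppose for each j the quantized matrix Q_j ∈ ℝ^{m_j × m_{j−1}} has columns q satisfying, against the corresponding columns w of W_j, the bound ‖w − q‖ ≤ (δ_j m_j / (2N_j)) (4√(m_j+3) N_j^{1 − 1/m_j} − 4√(m_j+3) + 1) for given step sizes δ_j > 0 and frame sizes N_j ∈ ℕ. Then for every input X ∈ ℝ^{m_0}, the quantized network f_Q(x) = Q_n σ(Q_{n−1} σ(··· σ(Q_1 x) ···)) satisfies ‖f(X)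 − f_Q(X)‖ ≤ L^{n−1} ‖X‖ · Σ_{j=1}^{n} [ 2√2 δ_j m_j √(m_j m_{j−1}) N_j^{−1/m_j} · ∏_{i=j+1}^{n} σ_i · ∏_{l=1}^{j−1} (2√2 δ_l m_l √(m_l m_{l−1}) N_l^{−1/m_l} + σ_l) ]. -/
open scoped RealInnerProductSpace BigOperators

/-! ### Auxiliary lemmas -/

noncomputable def epsD (δ : ℕ → ℝ) (N : ℕ → ℕ) (m : ℕ → ℕ) (j : ℕ) : ℝ :=
  2 * Real.sqrt 2 * δ j * (m (j + 1)) * Real.sqrt ((m (j + 1) : ℝ) * m j) *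
    (N j : ℝ) ^ (-(1 / (m (j + 1) : ℝ)))

noncomputable def SB (ε s : ℕ → ℝ) (i : ℕ) : ℝ :=
  ∑ j ∈ Finset.range i, ε j * (∏ k ∈ Finset.Ico (j + 1) i, s k) *
    ∏ l ∈ Finset.range j, (ε l + s l)

lemma SB_succ (ε s : ℕ → ℝ) (i : ℕ) :
    SB ε s (i + 1) = s i * SB ε s i + ε i * ∏ l ∈ Finset.range i, (ε l + s l) := by
  unfold SB
  rw [Finset.sum_range_succ, Finset.mul_sum]
  have h1 : ∏ k ∈ Finset.Ico (i + 1) (i + 1), s k = 1 := by simp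
  rw [h1]
  congr 1
  · apply Finset.sum_congr rfl
    intro j hj
    have hji : j + 1 ≤ i := Finset.mem_range.mp hj
    rw [Finset.prod_Ico_succ_top hji]
    ring
  · ring

lemma norm_eq' {d : ℕ} (x : EuclideanSpace ℝ (Fin d)) : ‖x‖ = Real.sqrt (∑ i, (x i)^2) := by
  rw [EuclideanSpace.norm_eq]; simp [sq_abs]

lemma cw_lip {L : ℝ} {σ : ℝ → ℝ} (hσ : ∀ a b : ℝ, |σ a - σ b| ≤ L * |a - b|)
    {d : ℕ} (u v : EuclideanSpace ℝ (Fin d)) :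
    ‖cwMap σ u - cwMap σ v‖ ≤ L * ‖u - v‖ := by
  have hL : 0 ≤ L := by
    have h := hσ 1 0; simp at h; linarith [abs_nonneg (σ 1 - σ 0)]
  rw [norm_eq', norm_eq']
  have key : ∑ i, ((cwMap σ u - cwMap σ v) i)^2 ≤ L^2 * ∑ i, ((u - v) i)^2 := by
    rw [Finset.mul_sum]
    apply Finset.sum_le_sum
    intro i _
    have h1 : |σ (u i) - σ (v i)| ≤ L * |u i - v i| := hσ _ _
    have h2 : ((cwMap σ u - cwMap σ v) i)^2 = |σ (u i) - σ (v i)|^2 := by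
      simp [cwMap, sq_abs]
    have h3 : ((u - v) i)^2 = |u i - v i|^2 := by simp [sq_abs]
    rw [h2, h3]
    calc |σ (u i) - σ (v i)|^2 ≤ (L * |u i - v i|)^2 := by
          apply sq_le_sq' <;> nlinarith [abs_nonneg (σ (u i) - σ (v i)), abs_nonneg (u i - v i)]
      _ = L^2 * |u i - v i|^2 := by ring
  calc Real.sqrt (∑ i, ((cwMap σ u - cwMap σ v) i)^2)
      ≤ Real.sqrt (L^2 * ∑ i, ((u - v) i)^2) := Real.sqrt_le_sqrt key
    _ = L * Real.sqrt (∑ i, ((u - v) i)^2) := by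
        rw [Real.sqrt_mul (sq_nonneg L), Real.sqrt_sq hL]

lemma cw_norm {L : ℝ} {σ : ℝ → ℝ} (hσ : ∀ a b : ℝ, |σ a - σ b| ≤ L * |a - b|)
    (hσ0 : σ 0 = 0) {d : ℕ} (u : EuclideanSpace ℝ (Fin d)) :
    ‖cwMap σ u‖ ≤ L * ‖u‖ := by
  have h0 : cwMap σ (0 : EuclideanSpace ℝ (Fin d)) = 0 := by
    ext i; simp [cwMap, hσ0]
  have := cw_lip hσ u 0
  rwa [h0, sub_zero, sub_zero] at this

lemma mat_col_bound {a b : ℕ} (A : Matrix (Fin a) (Fin b) ℝ) {B : ℝ} (hB : 0 ≤ B)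
    (hcol : ∀ c, ‖matCol A c‖ ≤ B) (v : EuclideanSpace ℝ (Fin b)) :
    ‖Matrix.toEuclideanLin A v‖ ≤ B * Real.sqrt b * ‖v‖ := by
  have happ : ∀ r, Matrix.toEuclideanLin A v r = ∑ c, A r c * v c := by
    intro r; rw [Matrix.toEuclideanLin_apply]; rfl
  rw [norm_eq', norm_eq']
  have hcolsum : ∑ c, ∑ r, (A r c)^2 ≤ (b : ℝ) * B^2 := by
    calc ∑ c, ∑ r, (A r c)^2 ≤ ∑ _c : Fin b, B^2 := by
          apply Finset.sum_le_sum; intro c _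
          have := hcol c
          rw [norm_eq'] at this
          have h0 : (0:ℝ) ≤ ∑ r, (matCol A c r)^2 :=
            Finset.sum_nonneg fun _ _ => sq_nonneg _
          have h2 : ∑ r, (A r c)^2 = ∑ r, (matCol A c r)^2 := rfl
          rw [h2]
          nlinarith [Real.sq_sqrt h0, Real.sqrt_nonneg (∑ r, (matCol A c r)^2)]
      _ = (b : ℝ) * B^2 := by simp [Finset.sum_const]
  have key : ∑ r, (Matrix.toEuclideanLin A v r)^2 ≤ ((b:ℝ) * B^2) * ∑ c, (v c)^2 := by
    calc ∑ r, (Matrix.toEuclideanLin A v r)^2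
        ≤ ∑ r, (∑ c, (A r c)^2) * ∑ c, (v c)^2 := by
          apply Finset.sum_le_sum; intro r _
          rw [happ r]
          exact Finset.sum_mul_sq_le_sq_mul_sq _ _ _
      _ = (∑ c, ∑ r, (A r c)^2) * ∑ c, (v c)^2 := by
          rw [← Finset.sum_mul, Finset.sum_comm]
      _ ≤ ((b:ℝ) * B^2) * ∑ c, (v c)^2 := by
          apply mul_le_mul_of_nonneg_right hcolsum
          exact Finset.sum_nonneg fun _ _ => sq_nonneg _
  calc Real.sqrt (∑ r, (Matrix.toEuclideanLin A v r)^2)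
      ≤ Real.sqrt (((b:ℝ) * B^2) * ∑ c, (v c)^2) := Real.sqrt_le_sqrt key
    _ = B * Real.sqrt b * Real.sqrt (∑ c, (v c)^2) := by
        rw [Real.sqrt_mul (by positivity), Real.sqrt_mul (by positivity),
          Real.sqrt_sq hB]
        ring

lemma arith {δ : ℝ} (hδ : 0 < δ) (mj mp N : ℕ) (hm : 3 ≤ mj) (hN : 0 < N) :
    δ * (mj : ℝ) / (2 * N) *
      (4 * Real.sqrt ((mj : ℝ) + 3) * (N : ℝ) ^ (1 - 1 / (mj : ℝ)) -
        4 * Real.sqrt ((mj : ℝ) + 3) + 1) * Real.sqrt mp ≤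
    2 * Real.sqrt 2 * δ * (mj : ℝ) * Real.sqrt ((mj : ℝ) * mp) * (N : ℝ) ^ (-(1 / (mj : ℝ))) := by
  set M := (mj : ℝ) with hM
  set P := (mp : ℝ) with hP
  set Nr := (N : ℝ) with hNr
  have hM3 : (3:ℝ) ≤ M := by rw [hM]; exact_mod_cast hm
  have hNr0 : (0:ℝ) < Nr := by rw [hNr]; exact_mod_cast hN
  have hA1 : (1:ℝ) ≤ Real.sqrt (M + 3) := by
    rw [show (1:ℝ) = Real.sqrt 1 by simp]
    exact Real.sqrt_le_sqrt (by linarith)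
  have hrpow : Nr ^ (1 - 1 / M) = Nr * Nr ^ (-(1 / M)) := by
    rw [show (1 - 1/M) = 1 + (-(1/M)) by ring, Real.rpow_add hNr0, Real.rpow_one]
  have hApos : (0:ℝ) ≤ Real.sqrt (M + 3) := Real.sqrt_nonneg _
  have hrp : (0:ℝ) ≤ Nr ^ (1 - 1/M) := Real.rpow_nonneg hNr0.le _
  have hrp2 : (0:ℝ) ≤ Nr ^ (-(1/M)) := Real.rpow_nonneg hNr0.le _
  have hPn : (0:ℝ) ≤ Real.sqrt P := Real.sqrt_nonneg _
  have hC : (0:ℝ) ≤ δ * M / (2 * Nr) := by positivity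
  have step1 : δ * M / (2 * Nr) *
      (4 * Real.sqrt (M + 3) * Nr ^ (1 - 1 / M) - 4 * Real.sqrt (M + 3) + 1) * Real.sqrt P ≤
      δ * M / (2 * Nr) * (4 * Real.sqrt (M + 3) * Nr ^ (1 - 1 / M)) * Real.sqrt P := by
    apply mul_le_mul_of_nonneg_right _ hPn
    apply mul_le_mul_of_nonneg_left _ hC
    linarith
  have step2 : δ * M / (2 * Nr) * (4 * Real.sqrt (M + 3) * Nr ^ (1 - 1 / M)) * Real.sqrt P
      = 2 * δ * M * Real.sqrt (M + 3) * Nr ^ (-(1/M)) * Real.sqrt P := by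
    rw [hrpow]; field_simp; ring
  have hsq : Real.sqrt (M + 3) ≤ Real.sqrt 2 * Real.sqrt M := by
    rw [← Real.sqrt_mul (by norm_num)]
    exact Real.sqrt_le_sqrt (by linarith)
  have step3 : 2 * δ * M * Real.sqrt (M + 3) * Nr ^ (-(1/M)) * Real.sqrt P ≤
      2 * δ * M * (Real.sqrt 2 * Real.sqrt M) * Nr ^ (-(1/M)) * Real.sqrt P := by
    have h1 : (0:ℝ) ≤ 2 * δ * M := by positivity
    have := mul_le_mul_of_nonneg_left hsq h1
    nlinarith [mul_nonneg hrp2 hPn]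
  have step4 : 2 * δ * M * (Real.sqrt 2 * Real.sqrt M) * Nr ^ (-(1/M)) * Real.sqrt P
      = 2 * Real.sqrt 2 * δ * M * Real.sqrt (M * P) * Nr ^ (-(1/M)) := by
    rw [Real.sqrt_mul (by positivity : (0:ℝ) ≤ M)]; ring
  linarith
/-- (Theorem 5.3: error bound between a feed-forward network and
its frame-quantized network; the network has `n+1` layers indexed `0, …, n`,
layer `j` mapping `ℝ^{m j} → ℝ^{m (j+1)}`, so the paper's `m_j` is `m (j+1)`,
`m_{j-1}` is `m j`, `L^{n-1}` is `L^n`). -/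
theorem stmt7 (L : ℝ) (σ : ℝ → ℝ)
    (hσ : ∀ a b : ℝ, |σ a - σ b| ≤ L * |a - b|) (hσ0 : σ 0 = 0)
    (n : ℕ) (m : ℕ → ℕ) (hm : ∀ i, 3 ≤ m i)
    (W Q : (i : ℕ) → Matrix (Fin (m (i + 1))) (Fin (m i)) ℝ)
    (δ : ℕ → ℝ) (hδ : ∀ j, 0 < δ j) (N : ℕ → ℕ) (hN : ∀ j, 0 < N j)
    (hcol : ∀ j ≤ n, ∀ c : Fin (m j),
      ‖matCol (W j) c - matCol (Q j) c‖ ≤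
        δ j * (m (j + 1)) / (2 * N j) *
          (4 * Real.sqrt ((m (j + 1) : ℝ) + 3) * (N j : ℝ) ^ (1 - 1 / (m (j + 1) : ℝ)) -
            4 * Real.sqrt ((m (j + 1) : ℝ) + 3) + 1))
    (X : EuclideanSpace ℝ (Fin (m 0))) :
    ‖net σ m W (n + 1) X - net σ m Q (n + 1) X‖ ≤
      L ^ n * ‖X‖ * ∑ j ∈ Finset.range (n + 1),
        (2 * Real.sqrt 2 * δ j * (m (j + 1)) * Real.sqrt ((m (j + 1) : ℝ) * m j) *
            (N j : ℝ) ^ (-(1 / (m (j + 1) : ℝ)))) *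
          (∏ i ∈ Finset.Ico (j + 1) (n + 1), opNorm (W i)) *
          (∏ l ∈ Finset.range j,
            (2 * Real.sqrt 2 * δ l * (m (l + 1)) * Real.sqrt ((m (l + 1) : ℝ) * m l) *
                (N l : ℝ) ^ (-(1 / (m (l + 1) : ℝ))) + opNorm (W l))) := by
  have hL : 0 ≤ L := by
    have h := hσ 1 0; simp at h; linarith [abs_nonneg (σ 1 - σ 0)]
  set E : ℕ → ℝ := epsD δ N m with hE
  set s : ℕ → ℝ := fun i => opNorm (W i) with hs
  have hEpos : ∀ j, 0 ≤ E j := by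
    intro j; rw [hE]; unfold epsD
    have := (hδ j).le
    positivity
  have hspos : ∀ i, 0 ≤ s i := fun i => norm_nonneg _
  have hWv : ∀ i (v : EuclideanSpace ℝ (Fin (m i))),
      ‖Matrix.toEuclideanLin (W i) v‖ ≤ s i * ‖v‖ := by
    intro i v
    exact (LinearMap.toContinuousLinearMap (Matrix.toEuclideanLin (W i))).le_opNorm v
  have hdiff : ∀ j, j ≤ n → ∀ v : EuclideanSpace ℝ (Fin (m j)),
      ‖Matrix.toEuclideanLin (W j) v - Matrix.toEuclideanLin (Q j) v‖ ≤ E j * ‖v‖ := by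
    intro j hj v
    have hsp : (0:ℝ) < Real.sqrt (m j) := by
      apply Real.sqrt_pos.mpr
      have := hm j; positivity
    have hB : (0:ℝ) ≤ E j / Real.sqrt (m j) := div_nonneg (hEpos j) hsp.le
    have hcols : ∀ c, ‖matCol (W j - Q j) c‖ ≤ E j / Real.sqrt (m j) := by
      intro c
      have heq : matCol (W j - Q j) c = matCol (W j) c - matCol (Q j) c := by
        ext i; simp [matCol, Matrix.sub_apply]
      rw [heq]
      refine (hcol j hj c).trans ?_
      rw [le_div_iff₀ hsp]
      have harith := arith (hδ j) (m (j+1)) (m j) (N j) (hm (j+1)) (hN j)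
      rw [hE]; unfold epsD
      exact harith
    have hmb := mat_col_bound (W j - Q j) hB hcols v
    have hmap : Matrix.toEuclideanLin (W j - Q j) v =
        Matrix.toEuclideanLin (W j) v - Matrix.toEuclideanLin (Q j) v := by
      rw [map_sub]; rfl
    rw [hmap] at hmb
    refine hmb.trans ?_
    rw [div_mul_cancel₀ _ (ne_of_gt hsp)]
  have hQv : ∀ j, j ≤ n → ∀ v : EuclideanSpace ℝ (Fin (m j)),
      ‖Matrix.toEuclideanLin (Q j) v‖ ≤ (E j + s j) * ‖v‖ := by
    intro j hj v
    have h1 : Matrix.toEuclideanLin (Q j) v =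
        Matrix.toEuclideanLin (W j) v -
          (Matrix.toEuclideanLin (W j) v - Matrix.toEuclideanLin (Q j) v) := by abel
    rw [h1]
    refine (norm_sub_le _ _).trans ?_
    have := add_le_add (hWv j v) (hdiff j hj v)
    linarith
  have hz' : ∀ i, i ≤ n →
      ‖layerSeq σ m Q X i‖ ≤ L ^ i * ‖X‖ * ∏ l ∈ Finset.range i, (E l + s l) := by
    intro i
    induction i with
    | zero => intro _; simp [layerSeq]
    | succ i ih =>
      intro hie
      have hi : i ≤ n := Nat.le_of_succ_le hie
      calc ‖layerSeq σ m Q X (i + 1)‖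
          = ‖cwMap σ (Matrix.toEuclideanLin (Q i) (layerSeq σ m Q X i))‖ := by
            simp only [layerSeq]
        _ ≤ L * ‖Matrix.toEuclideanLin (Q i) (layerSeq σ m Q X i)‖ := cw_norm hσ hσ0 _
        _ ≤ L * ((E i + s i) * ‖layerSeq σ m Q X i‖) :=
            mul_le_mul_of_nonneg_left (hQv i hi _) hL
        _ ≤ L * ((E i + s i) * (L ^ i * ‖X‖ * ∏ l ∈ Finset.range i, (E l + s l))) := by
            have hnn : (0:ℝ) ≤ E i + s i := add_nonneg (hEpos i) (hspos i)
            exact mul_le_mul_of_nonneg_left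
              (mul_le_mul_of_nonneg_left (ih hi) hnn) hL
        _ = L ^ (i + 1) * ‖X‖ * ∏ l ∈ Finset.range (i + 1), (E l + s l) := by
            rw [Finset.prod_range_succ]; ring
  have he : ∀ i, i ≤ n →
      ‖layerSeq σ m W X i - layerSeq σ m Q X i‖ ≤ L ^ i * ‖X‖ * SB E s i := by
    intro i
    induction i with
    | zero => intro _; simp [layerSeq, SB]
    | succ i ih =>
      intro hie
      have hi : i ≤ n := Nat.le_of_succ_le hie
      have hsplit : Matrix.toEuclideanLin (W i) (layerSeq σ m W X i) -
          Matrix.toEuclideanLin (Q i) (layerSeq σ m Q X i) =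
          Matrix.toEuclideanLin (W i) (layerSeq σ m W X i - layerSeq σ m Q X i) +
            (Matrix.toEuclideanLin (W i) (layerSeq σ m Q X i) -
              Matrix.toEuclideanLin (Q i) (layerSeq σ m Q X i)) := by
        rw [map_sub]; abel
      calc ‖layerSeq σ m W X (i + 1) - layerSeq σ m Q X (i + 1)‖
          = ‖cwMap σ (Matrix.toEuclideanLin (W i) (layerSeq σ m W X i)) -
              cwMap σ (Matrix.toEuclideanLin (Q i) (layerSeq σ m Q X i))‖ := by
            simp only [layerSeq]
        _ ≤ L * ‖Matrix.toEuclideanLin (W i) (layerSeq σ m W X i) -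
              Matrix.toEuclideanLin (Q i) (layerSeq σ m Q X i)‖ := cw_lip hσ _ _
        _ ≤ L * (‖Matrix.toEuclideanLin (W i) (layerSeq σ m W X i - layerSeq σ m Q X i)‖ +
              ‖Matrix.toEuclideanLin (W i) (layerSeq σ m Q X i) -
                Matrix.toEuclideanLin (Q i) (layerSeq σ m Q X i)‖) := by
            apply mul_le_mul_of_nonneg_left _ hL
            rw [hsplit]
            exact norm_add_le _ _
        _ ≤ L * (s i * ‖layerSeq σ m W X i - layerSeq σ m Q X i‖ +
              E i * ‖layerSeq σ m Q X i‖) :=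
            mul_le_mul_of_nonneg_left (add_le_add (hWv i _) (hdiff i hi _)) hL
        _ ≤ L * (s i * (L ^ i * ‖X‖ * SB E s i) +
              E i * (L ^ i * ‖X‖ * ∏ l ∈ Finset.range i, (E l + s l))) :=
            mul_le_mul_of_nonneg_left
              (add_le_add (mul_le_mul_of_nonneg_left (ih hi) (hspos i))
                (mul_le_mul_of_nonneg_left (hz' i hi) (hEpos i))) hL
        _ = L ^ (i + 1) * ‖X‖ * SB E s (i + 1) := by
            rw [SB_succ]; ring
  have hfin : ‖net σ m W (n + 1) X - net σ m Q (n + 1) X‖ ≤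
      L ^ n * ‖X‖ * SB E s (n + 1) := by
    have hsplit : Matrix.toEuclideanLin (W n) (layerSeq σ m W X n) -
        Matrix.toEuclideanLin (Q n) (layerSeq σ m Q X n) =
        Matrix.toEuclideanLin (W n) (layerSeq σ m W X n - layerSeq σ m Q X n) +
          (Matrix.toEuclideanLin (W n) (layerSeq σ m Q X n) -
            Matrix.toEuclideanLin (Q n) (layerSeq σ m Q X n)) := by
      rw [map_sub]; abel
    calc ‖net σ m W (n + 1) X - net σ m Q (n + 1) X‖
        = ‖Matrix.toEuclideanLin (W n) (layerSeq σ m W X n) -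
            Matrix.toEuclideanLin (Q n) (layerSeq σ m Q X n)‖ := by
          simp only [net]
      _ ≤ ‖Matrix.toEuclideanLin (W n) (layerSeq σ m W X n - layerSeq σ m Q X n)‖ +
            ‖Matrix.toEuclideanLin (W n) (layerSeq σ m Q X n) -
              Matrix.toEuclideanLin (Q n) (layerSeq σ m Q X n)‖ := by
          rw [hsplit]; exact norm_add_le _ _
      _ ≤ s n * ‖layerSeq σ m W X n - layerSeq σ m Q X n‖ +
            E n * ‖layerSeq σ m Q X n‖ :=
          add_le_add (hWv n _) (hdiff n le_rfl _)
      _ ≤ s n * (L ^ n * ‖X‖ * SB E s n) +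
            E n * (L ^ n * ‖X‖ * ∏ l ∈ Finset.range n, (E l + s l)) :=
          add_le_add (mul_le_mul_of_nonneg_left (he n le_rfl) (hspos n))
            (mul_le_mul_of_nonneg_left (hz' n le_rfl) (hEpos n))
      _ = L ^ n * ‖X‖ * SB E s (n + 1) := by rw [SB_succ]; ring
  exact hfin
end
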